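/- arXiv:2602.22627 — 9 statements merged into one kernel-verified Lean document; each statement's English description precedes it below -/
import Mathlib

section
/- Let A be an n×n row-stochastic matrix and E a diagonal nonnegative matrix with 0 < E(i) < 2·A(i,i) for all i. Then the induced infinity-norm of A−E is strictly less than 1, and consequently (A−E)^t → 0 as t → ∞. -/
open Filter Matrix

/-- The induced matrix infinity norm: maximum absolute row sum. -/
noncomputable def infNorm {n : ℕ} (M : Matrix (Fin n) (Fin n) ℝ) : ℝ :=
  ⨆ i, ∑ j, |M i j|

attribute [local instance] Matrix.linftyOpNormedRing

theorem stmt0 {n : ℕ} (A : Matrix (Fin n) (Fin n) ℝ) (e : Fin n → ℝ)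
    (hA0 : ∀ i j, 0 ≤ A i j) (hA1 : ∀ i, ∑ j, A i j = 1)
    (he : ∀ i, 0 < e i ∧ e i < 2 * A i i) :
    infNorm (A - Matrix.diagonal e) < 1 ∧
      Tendsto (fun t : ℕ => (A - Matrix.diagonal e) ^ t) atTop (nhds 0) := by
  set M := A - Matrix.diagonal e with hM
  have hrow : ∀ i, ∑ j, |M i j| < 1 := by
    intro i
    have hsplit : ∑ j, |M i j| = |M i i| + ∑ j ∈ Finset.univ.erase i, |M i j| :=
      (Finset.add_sum_erase _ _ (Finset.mem_univ i)).symm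
    have hoff : ∀ j ∈ Finset.univ.erase i, |M i j| = A i j := by
      intro j hj
      have hji : j ≠ i := Finset.ne_of_mem_erase hj
      simp [hM, Matrix.sub_apply, Matrix.diagonal_apply_ne' _ hji, abs_of_nonneg (hA0 i j)]
    have hsum_off : ∑ j ∈ Finset.univ.erase i, |M i j| = 1 - A i i := by
      rw [Finset.sum_congr rfl hoff]
      have := Finset.add_sum_erase Finset.univ (fun j => A i j) (Finset.mem_univ i)
      rw [hA1 i] at this
      linarith
    have hdiag : |M i i| < A i i := by
      have h1 := (he i).1
      have h2 := (he i).2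
      have : M i i = A i i - e i := by simp [hM]
      rw [this, abs_lt]
      constructor <;> linarith
    rw [hsplit, hsum_off]
    linarith
  have hnorm : ‖M‖ < 1 := by
    rw [Matrix.linfty_opNorm_def]
    have : ((Finset.univ : Finset (Fin n)).sup fun i => ∑ j, ‖M i j‖₊) < 1 := by
      rw [Finset.sup_lt_iff (by norm_num : (⊥ : NNReal) < 1)]
      intro i _
      have : ((∑ j, ‖M i j‖₊ : NNReal) : ℝ) < 1 := by
        push_cast
        simpa [Real.norm_eq_abs] using hrow i
      exact_mod_cast this
    exact_mod_cast this
  constructor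
  · rcases Nat.eq_zero_or_pos n with h0 | hpos
    · subst h0
      have : (⨆ i : Fin 0, ∑ j, |M i j|) = 0 := by
        exact Real.iSup_of_isEmpty _
      rw [infNorm, this]
      norm_num
    · have : Nonempty (Fin n) := ⟨⟨0, hpos⟩⟩
      obtain ⟨i0, hi0⟩ := Finite.exists_max (fun i => ∑ j, |M i j|)
      exact lt_of_le_of_lt (ciSup_le hi0) (hrow i0)
  · exact tendsto_pow_atTop_nhds_zero_of_norm_lt_one hnorm
end

section
/- Let B be an n×n row-substochastic matrix. Then B is zero-convergent (B^t → 0) if and only if for every index i ∈ {1,…,n} there exists a walk in the underlying digraph of B from vertex i to some vertex j whose row-sum in B is strictly less than 1. -/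
open Filter Matrix Topology

/-! If every vertex reaches a row of sum `< 1`, mass leaks along that walk, so every row sum of
`B ^ t` is eventually `< 1`; hence `‖B ^ T‖ < 1` in the `ℓ∞` operator norm for some `T > 0` and the
powers decay geometrically. Conversely, if every vertex reachable from `i` has row sum `1`, the
reachable set `S` is closed under arcs, so its indicator satisfies `𝟙_S ≤ B 𝟙_S`; then
`𝟙_S ≤ B ^ t 𝟙_S` for all `t`, and `(B ^ t 𝟙_S) i ≥ 1` keeps `B ^ t` away from `0`. -/

theorem norm_pow_le_norm_pow_pow_div {R : Type*} [SeminormedRing R] {x : R}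
    (hbdd : ∀ s, ‖x ^ s‖ ≤ 1) (T t : ℕ) : ‖x ^ t‖ ≤ ‖x ^ T‖ ^ (t / T) := by
  have hmul : ∀ m, ‖x ^ (T * m)‖ ≤ ‖x ^ T‖ ^ m := by
    intro m
    induction m with
    | zero => simpa using hbdd 0
    | succ m ih =>
      rw [Nat.mul_succ, pow_add, pow_succ]
      exact (norm_mul_le _ _).trans (mul_le_mul_of_nonneg_right ih (norm_nonneg _))
  calc ‖x ^ t‖ = ‖x ^ (T * (t / T)) * x ^ (t % T)‖ := by rw [← pow_add, Nat.div_add_mod]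
    _ ≤ ‖x ^ T‖ ^ (t / T) * 1 :=
      (norm_mul_le _ _).trans (mul_le_mul (hmul _) (hbdd _) (norm_nonneg _) (by positivity))
    _ = ‖x ^ T‖ ^ (t / T) := mul_one _

theorem tendsto_pow_atTop_nhds_zero_of_norm_pow_lt_one {R : Type*} [SeminormedRing R] {x : R}
    {T : ℕ} (hT0 : T ≠ 0) (hT : ‖x ^ T‖ < 1) (hbdd : ∀ s, ‖x ^ s‖ ≤ 1) :
    Tendsto (x ^ ·) atTop (𝓝 0) :=
  squeeze_zero_norm (norm_pow_le_norm_pow_pow_div hbdd T)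
    ((tendsto_pow_atTop_nhds_zero_of_lt_one (norm_nonneg _) hT).comp
      (Nat.tendsto_div_const_atTop hT0))

namespace Matrix

theorem mulVec_one_apply {m n α : Type*} [Fintype n] [NonAssocSemiring α] (A : Matrix m n α)
    (i : m) : (A *ᵥ 1) i = ∑ j, A i j := by
  simp [mulVec, dotProduct]

section Order

variable {m n α : Type*} [Fintype n] [Semiring α] [PartialOrder α]

theorem mulVec_apply_lt_mulVec_apply [IsStrictOrderedRing α] {A : Matrix m n α}
    (hA : ∀ i j, 0 ≤ A i j) {v w : n → α} (hvw : v ≤ w) {i : m} {j : n} (hij : A i j ≠ 0)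
    (hj : v j < w j) : (A *ᵥ v) i < (A *ᵥ w) i :=
  Finset.sum_lt_sum (fun k _ => mul_le_mul_of_nonneg_left (hvw k) (hA i k))
    ⟨j, Finset.mem_univ j, mul_lt_mul_of_pos_left hj ((hA i j).lt_of_ne' hij)⟩

variable [IsOrderedRing α]

theorem mulVec_monotone_of_nonneg {A : Matrix m n α} (hA : ∀ i j, 0 ≤ A i j) :
    Monotone (A *ᵥ ·) := fun _ _ hvw i =>
  Finset.sum_le_sum fun j _ => mul_le_mul_of_nonneg_left (hvw j) (hA i j)

variable [DecidableEq n] {A : Matrix n n α} {v : n → α}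

theorem monotone_pow_mulVec (hA : ∀ i j, 0 ≤ A i j) (hv : v ≤ A *ᵥ v) :
    Monotone fun t : ℕ => A ^ t *ᵥ v :=
  monotone_nat_of_le_succ fun t => by
    rw [pow_succ, ← mulVec_mulVec]
    exact mulVec_monotone_of_nonneg (pow_apply_nonneg hA t) hv

theorem antitone_pow_mulVec (hA : ∀ i j, 0 ≤ A i j) (hv : A *ᵥ v ≤ v) :
    Antitone fun t : ℕ => A ^ t *ᵥ v :=
  antitone_nat_of_succ_le fun t => by
    rw [pow_succ, ← mulVec_mulVec]
    exact mulVec_monotone_of_nonneg (pow_apply_nonneg hA t) hv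

theorem le_pow_mulVec (hA : ∀ i j, 0 ≤ A i j) (hv : v ≤ A *ᵥ v) (t : ℕ) : v ≤ A ^ t *ᵥ v := by
  simpa using monotone_pow_mulVec hA hv (Nat.zero_le t)

theorem pow_mulVec_le (hA : ∀ i j, 0 ≤ A i j) (hv : A *ᵥ v ≤ v) (t : ℕ) : A ^ t *ᵥ v ≤ v := by
  simpa using antitone_pow_mulVec hA hv (Nat.zero_le t)

end Order

theorem exists_pow_mulVec_one_lt_one_of_reflTransGen {ι α : Type*} [Fintype ι] [DecidableEq ι]
    [Semiring α] [PartialOrder α] [IsStrictOrderedRing α] {A : Matrix ι ι α}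
    (hA : ∀ i j, 0 ≤ A i j) (hrow : A *ᵥ 1 ≤ 1) {i j : ι}
    (hij : Relation.ReflTransGen (fun a b => A a b ≠ 0) i j) (hj : (A *ᵥ 1) j < 1) :
    ∃ t, (A ^ t *ᵥ 1) i < 1 := by
  induction hij using Relation.ReflTransGen.head_induction_on with
  | refl => exact ⟨1, by simpa using hj⟩
  | head hac _ ih =>
    obtain ⟨t, ht⟩ := ih
    refine ⟨t + 1, ?_⟩
    rw [pow_succ', ← mulVec_mulVec]
    calc (A *ᵥ (A ^ t *ᵥ 1)) _ < (A *ᵥ 1) _ :=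
          mulVec_apply_lt_mulVec_apply hA (pow_mulVec_le hA hrow t) hac ht
      _ ≤ 1 := hrow _

theorem not_tendsto_pow_nhds_zero_of_le_mulVec {ι : Type*} [Fintype ι] [DecidableEq ι]
    {A : Matrix ι ι ℝ} (hA : ∀ i j, 0 ≤ A i j) {v : ι → ℝ} (hv : v ≤ A *ᵥ v) {i : ι}
    (hvi : 0 < v i) : ¬ Tendsto (A ^ ·) atTop (𝓝 0) := by
  intro hlim
  have hlim_i : Tendsto (fun t : ℕ => (A ^ t *ᵥ v) i) atTop (𝓝 0) := by
    have hcont : Continuous fun M : Matrix ι ι ℝ => (M *ᵥ v) i :=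
      (continuous_apply i).comp (continuous_id.matrix_mulVec continuous_const)
    simpa [Function.comp_def] using (hcont.tendsto 0).comp hlim
  exact hvi.not_ge (ge_of_tendsto' hlim_i fun t => le_pow_mulVec hA hv t i)

theorem indicator_le_mulVec_indicator {ι α : Type*} [Fintype ι] [Semiring α] [PartialOrder α]
    [IsOrderedRing α] {A : Matrix ι ι α} (hA : ∀ i j, 0 ≤ A i j) {S : Set ι}
    (hS : ∀ j ∈ S, ∀ k, A j k ≠ 0 → k ∈ S) (hrow : ∀ j ∈ S, 1 ≤ ∑ k, A j k) :
    S.indicator 1 ≤ A *ᵥ S.indicator 1 := by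
  intro j
  by_cases hj : j ∈ S
  · have hA_ind : ∀ k, A j k * S.indicator 1 k = A j k := fun k => by
      by_cases hjk : A j k = 0
      · simp [hjk]
      · simp [hS j hj k hjk]
    simpa [mulVec, dotProduct, hA_ind, hj] using hrow j hj
  · simpa [hj] using
      mulVec_monotone_of_nonneg hA (Set.indicator_nonneg (by simp) : 0 ≤ S.indicator 1) j

section LinftyOp

attribute [local instance] Matrix.linftyOpNormedAddCommGroup

variable {ι : Type*} [Fintype ι] {A : Matrix ι ι ℝ}

theorem coe_sum_nnnorm_eq_mulVec_one_apply (hA : ∀ i j, 0 ≤ A i j) (i : ι) :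
    ((∑ j, ‖A i j‖₊ : NNReal) : ℝ) = (A *ᵥ 1) i := by
  simp [mulVec_one_apply, Real.norm_of_nonneg (hA i _)]

theorem linfty_opNorm_le_one_of_nonneg (hA : ∀ i j, 0 ≤ A i j) (hrow : A *ᵥ 1 ≤ 1) :
    ‖A‖ ≤ 1 := by
  rw [linfty_opNorm_def, NNReal.coe_le_one, Finset.sup_le_iff]
  intro i _
  rw [← NNReal.coe_le_one, coe_sum_nnnorm_eq_mulVec_one_apply hA]
  exact hrow i

theorem linfty_opNorm_lt_one_of_nonneg (hA : ∀ i j, 0 ≤ A i j) (hrow : ∀ i, (A *ᵥ 1) i < 1) :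
    ‖A‖ < 1 := by
  rw [linfty_opNorm_def, NNReal.coe_lt_one, Finset.sup_lt_iff zero_lt_one]
  intro i _
  rw [← NNReal.coe_lt_one, coe_sum_nnnorm_eq_mulVec_one_apply hA]
  exact hrow i

end LinftyOp

theorem tendsto_pow_atTop_nhds_zero_of_exists_pow_mulVec_one_lt_one {ι : Type*} [Fintype ι]
    [DecidableEq ι] {A : Matrix ι ι ℝ} (hA : ∀ i j, 0 ≤ A i j) (hrow : A *ᵥ 1 ≤ 1)
    (h : ∀ i, ∃ t, (A ^ t *ᵥ 1) i < 1) : Tendsto (A ^ ·) atTop (𝓝 0) := by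
  -- The `ℓ∞` operator norm induces the product topology, so its limits are the ones stated here.
  let _ := Matrix.linftyOpNormedRing (n := ι) (α := ℝ)
  have hev : ∀ᶠ t in atTop, ∀ i, (A ^ t *ᵥ 1) i < 1 := eventually_all.2 fun i => by
    obtain ⟨t, ht⟩ := h i
    exact eventually_atTop.2 ⟨t, fun s hs => (antitone_pow_mulVec hA hrow hs i).trans_lt ht⟩
  obtain ⟨T, hT, hT0⟩ := (hev.and (eventually_ne_atTop 0)).exists
  exact tendsto_pow_atTop_nhds_zero_of_norm_pow_lt_one hT0
    (linfty_opNorm_lt_one_of_nonneg (pow_apply_nonneg hA T) hT)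
    fun s => linfty_opNorm_le_one_of_nonneg (pow_apply_nonneg hA s) (pow_mulVec_le hA hrow s)

end Matrix

theorem stmt3 {n : ℕ} (B : Matrix (Fin n) (Fin n) ℝ)
    (h0 : ∀ i j, 0 ≤ B i j) (h1 : ∀ i, ∑ j, B i j ≤ 1) :
    Tendsto (fun t : ℕ => B ^ t) atTop (nhds 0) ↔
      ∀ i : Fin n, ∃ j : Fin n,
        Relation.ReflTransGen (fun a b => B a b ≠ 0) i j ∧ ∑ k, B j k < 1 := by
  have hrow : B *ᵥ 1 ≤ 1 := fun i => (mulVec_one_apply B i).trans_le (h1 i)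
  constructor
  · intro hlim i
    by_contra! hi
    let S := {j | Relation.ReflTransGen (fun a b => B a b ≠ 0) i j}
    have hS : ∀ j ∈ S, ∀ k, B j k ≠ 0 → k ∈ S := fun _ hj _ hjk => hj.tail hjk
    exact not_tendsto_pow_nhds_zero_of_le_mulVec h0 (indicator_le_mulVec_indicator h0 hS hi)
      (i := i) (by simp [S, Relation.ReflTransGen.refl]) hlim
  · intro hwalk
    refine tendsto_pow_atTop_nhds_zero_of_exists_pow_mulVec_one_lt_one h0 hrow fun i => ?_
    obtain ⟨j, hij, hj⟩ := hwalk i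
    exact exists_pow_mulVec_one_lt_one_of_reflTransGen h0 hrow hij (by rwa [mulVec_one_apply])
end

section
/- Let A be a row-substochastic matrix such that A is condensely aperiodic (every sink strongly connected component of the underlying digraph induces an aperiodic subgraph or is a single vertex without a self-loop). Then the limit lim_{t→∞} A^t exists and is row-substochastic. -/
open Filter Matrix

def IsSCC {V : Type*} (r : V → V → Prop) (W : Set V) : Prop :=
  W.Nonempty ∧
  (∀ i ∈ W, ∀ j ∈ W, Relation.ReflTransGen r i j) ∧
  (∀ i ∈ W, ∀ j, Relation.ReflTransGen r i j → Relation.ReflTransGen r j i → j ∈ W)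

def IsSinkSCC {V : Type*} (r : V → V → Prop) (W : Set V) : Prop :=
  IsSCC r W ∧ ∀ i ∈ W, ∀ j, r i j → j ∈ W

/-- `WalkIn r W k i j`: there is a walk of length `k` from `i` to `j` whose vertices
(after the first) all lie in `W`. -/
def WalkIn {V : Type*} (r : V → V → Prop) (W : Set V) : ℕ → V → V → Prop
  | 0, i, j => i = j
  | (k+1), i, j => ∃ m ∈ W, r i m ∧ WalkIn r W k m j

/-!
Let `R` be the union of the sink classes of `G[A]` on which `A` is stochastic; `R` is closed
under arcs. On such a class `A` restricts to a stochastic matrix, and aperiodicity (via the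
Frobenius coin problem) makes one of its powers entrywise positive, so Doeblin's argument
contracts the oscillation of each column of `A^t` geometrically and these rows converge. The
alternative of an isolated vertex without loop cannot occur for such a class, since its row sum
would be `0`. Every vertex outside `R` reaches `R` or a row of sum `< 1`, so the mass that `A^t`
puts outside `R` decays geometrically. Writing `A^(s+u) = A^s A^u` with `s` large then shows that
every entry of `A^t` is a Cauchy sequence.
-/

open Relation Topology

section Walks

variable {V : Type*} {r : V → V → Prop} {W : Set V}

theorem WalkIn.append {k l : ℕ} {i j m : V} (h₁ : WalkIn r W k i j) (h₂ : WalkIn r W l j m) :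
    WalkIn r W (k + l) i m := by
  induction k generalizing i with
  | zero => cases h₁; simpa using h₂
  | succ k ih =>
    obtain ⟨x, hx, hix, hxj⟩ := h₁
    rw [Nat.add_right_comm]
    exact ⟨x, hx, hix, ih hxj⟩

theorem Relation.ReflTransGen.exists_walkIn (hW : ∀ a ∈ W, ∀ b, r a b → b ∈ W) {i j : V}
    (h : ReflTransGen r i j) (hi : i ∈ W) : ∃ k, WalkIn r W k i j := by
  induction h using ReflTransGen.head_induction_on with
  | refl => exact ⟨0, rfl⟩
  | head hac _ ih =>
    obtain ⟨k, hk⟩ := ih (hW _ hi _ hac)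
    exact ⟨k + 1, _, hW _ hi _ hac, hac, hk⟩

theorem exists_reflTransGen_terminal [Finite V] (r : V → V → Prop) (i : V) :
    ∃ v, ReflTransGen r i v ∧ ∀ w, ReflTransGen r v w → ReflTransGen r w v := by
  obtain ⟨v, hiv, hmin⟩ := Set.exists_min_image {v | ReflTransGen r i v}
    (fun v => {u | ReflTransGen r v u}.ncard) (Set.toFinite _) ⟨i, .refl⟩
  refine ⟨v, hiv, fun w hvw => ?_⟩
  have hsub : {u | ReflTransGen r w u} ⊆ {u | ReflTransGen r v u} := fun u => hvw.trans
  have heq := Set.eq_of_subset_of_ncard_le hsub (hmin w (hiv.trans hvw)) (Set.toFinite _)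
  exact (Set.ext_iff.1 heq v).2 .refl

theorem isSinkSCC_of_terminal {v : V} (hv : ∀ w, ReflTransGen r v w → ReflTransGen r w v) :
    IsSinkSCC r {u | ReflTransGen r v u} :=
  ⟨⟨⟨v, .refl⟩, fun _ ha _ hb => (hv _ ha).trans hb, fun _ ha _ hab _ => ha.trans hab⟩,
    fun _ ha _ hab => ha.tail hab⟩

theorem exists_isSinkSCC_reachable [Finite V] (r : V → V → Prop) (i : V) :
    ∃ W, IsSinkSCC r W ∧ ∃ v ∈ W, ReflTransGen r i v := by
  obtain ⟨v, hiv, hv⟩ := exists_reflTransGen_terminal r i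
  exact ⟨_, isSinkSCC_of_terminal hv, v, .refl, hiv⟩

def closedWalkLengths (r : V → V → Prop) (W : Set V) (i : V) : AddSubmonoid ℕ where
  carrier := {k | WalkIn r W k i i}
  add_mem' := WalkIn.append
  zero_mem' := rfl

theorem eventually_walkIn_of_aperiodic [Finite V] (hW : IsSinkSCC r W)
    (hgcd : ∀ d : ℕ, (∀ k, 0 < k → (∃ i ∈ W, WalkIn r W k i i) → d ∣ k) → d = 1) :
    ∀ᶠ N in atTop, ∀ k ∈ W, ∀ l ∈ W, WalkIn r W N k l := by
  obtain ⟨⟨⟨i₀, hi₀⟩, hconn, -⟩, hclosed⟩ := hW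
  have walk : ∀ a ∈ W, ∀ b ∈ W, ∃ k, WalkIn r W k a b :=
    fun a ha b hb => (hconn a ha b hb).exists_walkIn hclosed ha
  set S : Set ℕ := (closedWalkLengths r W i₀ : Set ℕ)
  -- a cycle of length `k` at `i` gives closed walks at `i₀` of lengths `a + b` and `a + k + b`
  have hgcd₀ : Nat.setGcd S = 1 := by
    refine hgcd _ fun k _ ⟨i, hi, hk⟩ => ?_
    obtain ⟨a, ha⟩ := walk i₀ hi₀ i hi
    obtain ⟨b, hb⟩ := walk i hi i₀ hi₀
    have h₁ : Nat.setGcd S ∣ a + b := Nat.setGcd_dvd_of_mem (ha.append hb)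
    have h₂ : Nat.setGcd S ∣ a + (k + b) := Nat.setGcd_dvd_of_mem (ha.append (hk.append hb))
    rw [Nat.add_left_comm, Nat.add_comm] at h₂
    exact (Nat.dvd_add_right h₁).1 h₂
  obtain ⟨B, hB⟩ := Nat.exists_mem_closure_of_ge S
  simp only [hgcd₀, isUnit_one, IsUnit.dvd, forall_const, S, AddSubmonoid.closure_eq] at hB
  refine eventually_all.2 fun k => eventually_imp_distrib_left.2 fun hk =>
    eventually_all.2 fun l => eventually_imp_distrib_left.2 fun hl => ?_
  obtain ⟨p, hp⟩ := walk k hk i₀ hi₀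
  obtain ⟨q, hq⟩ := walk i₀ hi₀ l hl
  refine eventually_atTop.2 ⟨p + B + q, fun N hN => ?_⟩
  have h := hp.append ((hB (N - p - q) (by omega)).append hq)
  rwa [show p + (N - p - q + q) = N by omega] at h

end Walks

theorem tendsto_zero_of_antitone_of_le_mul {f : ℕ → ℝ} (hf : Antitone f) (hf0 : ∀ t, 0 ≤ f t)
    {N : ℕ} {ρ : ℝ} (hρ : ρ < 1) (hN : ∀ t, f (t + N) ≤ ρ * f t) : Tendsto f atTop (𝓝 0) := by
  have hL := tendsto_atTop_ciInf hf ⟨0, Set.forall_mem_range.2 hf0⟩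
  have hle : ⨅ t, f t ≤ ρ * ⨅ t, f t :=
    le_of_tendsto_of_tendsto ((tendsto_add_atTop_iff_nat N).2 hL) (hL.const_mul ρ)
      (Eventually.of_forall hN)
  have h0 : 0 ≤ ⨅ t, f t := le_ciInf hf0
  rwa [show ⨅ t, f t = 0 by nlinarith] at hL

section Substochastic

variable {ι : Type*} [Fintype ι] [DecidableEq ι] {A : Matrix ι ι ℝ}

theorem sum_pow_add_apply (s t : ℕ) (T : Finset ι) (i : ι) :
    ∑ j ∈ T, (A ^ (s + t)) i j = ∑ l, (A ^ s) i l * ∑ j ∈ T, (A ^ t) l j := by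
  simp only [pow_add, mul_apply, Finset.mul_sum]
  exact Finset.sum_comm

theorem sum_pow_apply_le_one (h0 : ∀ i j, 0 ≤ A i j) (h1 : ∀ i, ∑ j, A i j ≤ 1) (t : ℕ)
    (i : ι) : ∑ j, (A ^ t) i j ≤ 1 := by
  induction t generalizing i with
  | zero => simp [one_apply]
  | succ t ih =>
    rw [add_comm, sum_pow_add_apply, pow_one]
    calc ∑ l, A i l * ∑ j, (A ^ t) l j ≤ ∑ l, A i l * 1 :=
          Finset.sum_le_sum fun l _ => mul_le_mul_of_nonneg_left (ih l) (h0 i l)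
      _ ≤ 1 := by simpa using h1 i

theorem pow_apply_le_one (h0 : ∀ i j, 0 ≤ A i j) (h1 : ∀ i, ∑ j, A i j ≤ 1) (t : ℕ)
    (i j : ι) : (A ^ t) i j ≤ 1 :=
  (Finset.single_le_sum (fun l _ => pow_apply_nonneg h0 t i l) (Finset.mem_univ j)).trans
    (sum_pow_apply_le_one h0 h1 t i)

theorem WalkIn.pow_apply_pos (h0 : ∀ i j, 0 ≤ A i j) {W : Set ι} {t : ℕ} {i j : ι}
    (h : WalkIn (fun a b => A a b ≠ 0) W t i j) : 0 < (A ^ t) i j := by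
  induction t generalizing i with
  | zero => cases h; simp
  | succ t ih =>
    obtain ⟨m, -, him, hmj⟩ := h
    rw [pow_succ', mul_apply]
    exact (mul_pos ((h0 i m).lt_of_ne' him) (ih hmj)).trans_le <| Finset.single_le_sum
      (fun l _ => mul_nonneg (h0 i l) (pow_apply_nonneg h0 t l j)) (Finset.mem_univ m)

theorem pow_apply_eq_zero_of_closed {W : Set ι} (hW : ∀ a ∈ W, ∀ b, A a b ≠ 0 → b ∈ W)
    (t : ℕ) {a b : ι} (ha : a ∈ W) (hb : b ∉ W) : (A ^ t) a b = 0 := by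
  induction t generalizing a with
  | zero => exact one_apply_ne fun hab => hb (hab ▸ ha)
  | succ t ih =>
    rw [pow_succ', mul_apply]
    refine Finset.sum_eq_zero fun m _ => ?_
    by_cases ham : A a m = 0
    · rw [ham, zero_mul]
    · rw [ih (hW a ha m ham), mul_zero]

end Substochastic

section Doeblin

variable {κ : Type*} [Fintype κ]

theorem sum_mul_le_sub_mul {w v : κ → ℝ} {M δ : ℝ} (hw0 : ∀ l, 0 ≤ w l) (hw1 : ∑ l, w l = 1)
    (hv : ∀ l, v l ≤ M) (l₀ : κ) (hδ : δ ≤ w l₀) : ∑ l, w l * v l ≤ M - δ * (M - v l₀) :=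
  calc ∑ l, w l * v l = M - ∑ l, w l * (M - v l) := by
        simp only [mul_sub, Finset.sum_sub_distrib, ← Finset.sum_mul, hw1, one_mul, sub_sub_cancel]
    _ ≤ M - w l₀ * (M - v l₀) := sub_le_sub_left (Finset.single_le_sum
        (fun l _ => mul_nonneg (hw0 l) (sub_nonneg.2 (hv l))) (Finset.mem_univ l₀)) M
    _ ≤ M - δ * (M - v l₀) :=
        sub_le_sub_left (mul_le_mul_of_nonneg_right hδ (sub_nonneg.2 (hv l₀))) M

def colSup (P : Matrix κ κ ℝ) (j : κ) : ℝ := Finset.univ.sup' ⟨j, Finset.mem_univ j⟩ fun i => P i j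

def colInf (P : Matrix κ κ ℝ) (j : κ) : ℝ := Finset.univ.inf' ⟨j, Finset.mem_univ j⟩ fun i => P i j

variable {P Q : Matrix κ κ ℝ} {j : κ}

theorem le_colSup (i : κ) : P i j ≤ colSup P j :=
  Finset.le_sup' (fun i => P i j) (Finset.mem_univ i)

theorem colInf_le (i : κ) : colInf P j ≤ P i j :=
  Finset.inf'_le (fun i => P i j) (Finset.mem_univ i)

theorem exists_colInf_eq : ∃ i, P i j = colInf P j := by
  obtain ⟨i, -, hi⟩ := Finset.exists_mem_eq_inf' ⟨j, Finset.mem_univ j⟩ fun i => P i j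
  exact ⟨i, hi.symm⟩

variable [DecidableEq κ]

theorem colSup_mul_le_sub (hQ : Q ∈ rowStochastic ℝ κ) {δ : ℝ} (hδ : ∀ i l, δ ≤ Q i l) :
    colSup (Q * P) j ≤ colSup P j - δ * (colSup P j - colInf P j) := by
  obtain ⟨l₀, hl₀⟩ := exists_colInf_eq (P := P) (j := j)
  refine Finset.sup'_le _ _ fun i _ => ?_
  rw [mul_apply, ← hl₀]
  exact sum_mul_le_sub_mul (fun l => hQ.1 i l) (sum_row_of_mem_rowStochastic hQ i)
    (fun l => le_colSup l) l₀ (hδ i l₀)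

theorem colSup_mul_le (hQ : Q ∈ rowStochastic ℝ κ) : colSup (Q * P) j ≤ colSup P j := by
  simpa using colSup_mul_le_sub (P := P) (j := j) hQ hQ.1

theorem colInf_le_colInf_mul (hQ : Q ∈ rowStochastic ℝ κ) : colInf P j ≤ colInf (Q * P) j := by
  refine Finset.le_inf' _ _ fun i _ => ?_
  calc colInf P j = ∑ l, Q i l * colInf P j := by
        rw [← Finset.sum_mul, sum_row_of_mem_rowStochastic hQ i, one_mul]
    _ ≤ (Q * P) i j :=
        Finset.sum_le_sum fun l _ => mul_le_mul_of_nonneg_left (colInf_le l) (hQ.1 i l)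

theorem colSup_sub_colInf_mul_le (hQ : Q ∈ rowStochastic ℝ κ) {δ : ℝ} (hδ : ∀ i l, δ ≤ Q i l) :
    colSup (Q * P) j - colInf (Q * P) j ≤ (1 - δ) * (colSup P j - colInf P j) := by
  linarith [colSup_mul_le_sub (P := P) (j := j) hQ hδ, colInf_le_colInf_mul (P := P) (j := j) hQ]

theorem exists_tendsto_pow_apply_of_pos (hP : P ∈ rowStochastic ℝ κ) {N : ℕ}
    (hN : ∀ i l, 0 < (P ^ N) i l) (j : κ) :
    ∃ L, ∀ i, Tendsto (fun t => (P ^ t) i j) atTop (𝓝 L) := by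
  set M := fun t => colSup (P ^ t) j
  set m := fun t => colInf (P ^ t) j
  have hM : Antitone M := antitone_nat_of_succ_le fun t => by
    simpa only [M, pow_succ'] using colSup_mul_le hP
  have hm : Monotone m := monotone_nat_of_le_succ fun t => by
    simpa only [m, pow_succ'] using colInf_le_colInf_mul hP
  have hmM : ∀ t, m t ≤ M t := fun t => (colInf_le j).trans (le_colSup j)
  obtain ⟨δ, hδ, hδN⟩ : ∃ δ > 0, ∀ i l, δ ≤ (P ^ N) i l := by
    have : Nonempty κ := ⟨j⟩
    obtain ⟨⟨i₀, l₀⟩, h⟩ := Finite.exists_min fun p : κ × κ => (P ^ N) p.1 p.2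
    exact ⟨_, hN i₀ l₀, fun i l => h (i, l)⟩
  have hosc : Tendsto (fun t => M t - m t) atTop (𝓝 0) :=
    tendsto_zero_of_antitone_of_le_mul (fun s t hst => by linarith [hM hst, hm hst])
      (fun t => sub_nonneg.2 (hmM t)) (by linarith : 1 - δ < 1) fun t => by
        simpa only [M, m, add_comm t, pow_add] using
          colSup_sub_colInf_mul_le (pow_mem hP N) hδN
  have hMlim := tendsto_atTop_ciInf hM
    ⟨m 0, Set.forall_mem_range.2 fun t => (hm t.zero_le).trans (hmM t)⟩
  have hmlim : Tendsto m atTop (𝓝 (⨅ t, M t)) := by simpa using hMlim.sub hosc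
  exact ⟨_, fun i => tendsto_of_tendsto_of_tendsto_of_le_of_le hmlim hMlim
    (fun t => colInf_le i) (fun t => le_colSup i)⟩

end Doeblin

section ClosedClass

variable {ι : Type*} [Fintype ι] [DecidableEq ι] {A : Matrix ι ι ℝ} {W : Set ι}
  [DecidablePred (· ∈ W)]

theorem sum_subtype_pow_apply_of_closed (hW : ∀ a ∈ W, ∀ b, A a b ≠ 0 → b ∈ W) (t : ℕ) {a : ι}
    (ha : a ∈ W) (f : ι → ℝ) :
    ∑ l : {l // l ∈ W}, (A ^ t) a l * f l = ∑ l, (A ^ t) a l * f l := by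
  rw [← Fintype.sum_subtype_add_sum_subtype (· ∈ W), left_eq_add]
  exact Finset.sum_eq_zero fun l _ => by rw [pow_apply_eq_zero_of_closed hW t ha l.2, zero_mul]

theorem toBlock_pow_of_closed (hW : ∀ a ∈ W, ∀ b, A a b ≠ 0 → b ∈ W) (t : ℕ) :
    A.toBlock (· ∈ W) (· ∈ W) ^ t = (A ^ t).toBlock (· ∈ W) (· ∈ W) := by
  induction t with
  | zero => exact (submatrix_one _ Subtype.val_injective).symm
  | succ t ih =>
    ext k l
    simp only [pow_succ, ih, mul_apply, toBlock_apply]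
    exact sum_subtype_pow_apply_of_closed hW t k.2 (fun m => A m l)

theorem toBlock_mem_rowStochastic_of_closed (h0 : ∀ i j, 0 ≤ A i j)
    (hW : ∀ a ∈ W, ∀ b, A a b ≠ 0 → b ∈ W) (hstoch : ∀ w ∈ W, ∑ j, A w j = 1) :
    A.toBlock (· ∈ W) (· ∈ W) ∈ rowStochastic ℝ {l // l ∈ W} := by
  refine mem_rowStochastic_iff_sum.2 ⟨fun k l => h0 k l, fun k => ?_⟩
  simpa using (sum_subtype_pow_apply_of_closed hW 1 k.2 fun _ => 1).trans
    (by simpa using hstoch k k.2)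

theorem exists_tendsto_pow_apply_of_closed (h0 : ∀ i j, 0 ≤ A i j)
    (hW : ∀ a ∈ W, ∀ b, A a b ≠ 0 → b ∈ W) (hstoch : ∀ w ∈ W, ∑ j, A w j = 1) {N : ℕ}
    (hN : ∀ k ∈ W, ∀ l ∈ W, 0 < (A ^ N) k l) {k : ι} (hk : k ∈ W) (j : ι) :
    ∃ L, Tendsto (fun t => (A ^ t) k j) atTop (𝓝 L) := by
  by_cases hj : j ∈ W
  · obtain ⟨L, hL⟩ := exists_tendsto_pow_apply_of_pos
      (toBlock_mem_rowStochastic_of_closed h0 hW hstoch) (N := N)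
      (fun k l => by simpa [toBlock_pow_of_closed hW] using hN k k.2 l l.2) ⟨j, hj⟩
    exact ⟨L, by simpa [toBlock_pow_of_closed hW] using hL ⟨k, hk⟩⟩
  · exact ⟨0, by simp [pow_apply_eq_zero_of_closed hW _ hk hj]⟩

end ClosedClass

section Leak

variable {ι : Type*} [Fintype ι] [DecidableEq ι] {A : Matrix ι ι ℝ} {T : Finset ι}

def massOn (A : Matrix ι ι ℝ) (T : Finset ι) (t : ℕ) (i : ι) : ℝ := ∑ j ∈ T, (A ^ t) i j

theorem massOn_add (s t : ℕ) (i : ι) :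
    massOn A T (s + t) i = ∑ l, (A ^ s) i l * massOn A T t l :=
  sum_pow_add_apply s t T i

theorem massOn_nonneg (h0 : ∀ i j, 0 ≤ A i j) (t : ℕ) (i : ι) : 0 ≤ massOn A T t i :=
  Finset.sum_nonneg fun j _ => pow_apply_nonneg h0 t i j

theorem massOn_le_one (h0 : ∀ i j, 0 ≤ A i j) (h1 : ∀ i, ∑ j, A i j ≤ 1) (t : ℕ) (i : ι) :
    massOn A T t i ≤ 1 :=
  (Finset.sum_le_univ_sum_of_nonneg (pow_apply_nonneg h0 t i)).trans
    (sum_pow_apply_le_one h0 h1 t i)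

theorem massOn_add_le_mul (h0 : ∀ i j, 0 ≤ A i j) (hT : ∀ a ∉ T, ∀ b, A a b ≠ 0 → b ∉ T)
    {s : ℕ} {c : ℝ} (hc : ∀ l ∈ T, massOn A T s l ≤ c) (t : ℕ) (i : ι) :
    massOn A T (t + s) i ≤ c * massOn A T t i := by
  have hzero : ∀ l ∉ T, massOn A T s l = 0 := fun l hl => Finset.sum_eq_zero fun j hj =>
    pow_apply_eq_zero_of_closed (W := (↑T)ᶜ) hT s hl (not_not.2 hj)
  calc massOn A T (t + s) i = ∑ l ∈ T, (A ^ t) i l * massOn A T s l := by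
        rw [massOn_add, ← Fintype.sum_subset fun l hl => ?_]
        by_contra hlT
        exact hl (by rw [hzero l hlT, mul_zero])
    _ ≤ ∑ l ∈ T, (A ^ t) i l * c :=
        Finset.sum_le_sum fun l hl =>
          mul_le_mul_of_nonneg_left (hc l hl) (pow_apply_nonneg h0 t i l)
    _ = c * massOn A T t i := by rw [← Finset.sum_mul, mul_comm, massOn]

theorem massOn_antitone (h0 : ∀ i j, 0 ≤ A i j) (h1 : ∀ i, ∑ j, A i j ≤ 1)
    (hT : ∀ a ∉ T, ∀ b, A a b ≠ 0 → b ∉ T) (i : ι) : Antitone fun t => massOn A T t i :=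
  antitone_nat_of_succ_le fun t => by
    simpa using massOn_add_le_mul h0 hT (fun l _ => massOn_le_one h0 h1 1 l) t i

theorem exists_massOn_lt_one (h0 : ∀ i j, 0 ≤ A i j) (h1 : ∀ i, ∑ j, A i j ≤ 1) {i v : ι}
    (hiv : ReflTransGen (fun a b => A a b ≠ 0) i v) (hv : v ∉ T ∨ ∑ j, A v j < 1) :
    ∃ t, massOn A T t i < 1 := by
  induction hiv using ReflTransGen.head_induction_on with
  | refl =>
    rcases hv with hv | hv
    · exact ⟨0, by simp [massOn, one_apply, hv]⟩
    · exact ⟨1, (Finset.sum_le_univ_sum_of_nonneg (by simpa using h0 v)).trans_lt (by simpa)⟩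
  | @head a c hac _ ih =>
    obtain ⟨t, ht⟩ := ih
    refine ⟨1 + t, ?_⟩
    rw [massOn_add, pow_one]
    calc ∑ l, A a l * massOn A T t l < ∑ l, A a l * 1 :=
          Finset.sum_lt_sum
            (fun l _ => mul_le_mul_of_nonneg_left (massOn_le_one h0 h1 t l) (h0 a l))
            ⟨c, Finset.mem_univ c, mul_lt_mul_of_pos_left ht ((h0 a c).lt_of_ne' hac)⟩
      _ ≤ 1 := by simpa using h1 a

theorem tendsto_massOn_zero (h0 : ∀ i j, 0 ≤ A i j) (h1 : ∀ i, ∑ j, A i j ≤ 1)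
    (hT : ∀ a ∉ T, ∀ b, A a b ≠ 0 → b ∉ T)
    (hleak : ∀ i ∈ T, ∃ v, ReflTransGen (fun a b => A a b ≠ 0) i v ∧ (v ∉ T ∨ ∑ j, A v j < 1))
    (i : ι) : Tendsto (fun t => massOn A T t i) atTop (𝓝 0) := by
  have hlt : ∀ᶠ m in atTop, ∀ l ∈ T, massOn A T m l < 1 := by
    refine (eventually_all_finset T).2 fun l hl => ?_
    obtain ⟨v, hlv, hv⟩ := hleak l hl
    obtain ⟨t, ht⟩ := exists_massOn_lt_one h0 h1 hlv hv
    exact eventually_atTop.2 ⟨t, fun m hm => (massOn_antitone h0 h1 hT l hm).trans_lt ht⟩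
  obtain ⟨m, hm⟩ := hlt.exists
  obtain ⟨γ, hγ, hγm⟩ : ∃ γ < 1, ∀ l ∈ T, massOn A T m l ≤ γ := by
    rcases T.eq_empty_or_nonempty with rfl | hne
    · exact ⟨0, one_pos, by simp⟩
    · exact ⟨T.sup' hne _, (Finset.sup'_lt_iff _).2 hm, fun l hl => Finset.le_sup' _ hl⟩
  exact tendsto_zero_of_antitone_of_le_mul (massOn_antitone h0 h1 hT i) (massOn_nonneg h0 · i) hγ
    fun t => massOn_add_le_mul h0 hT hγm t i

theorem dist_pow_add_apply_le (h0 : ∀ i j, 0 ≤ A i j) (h1 : ∀ i, ∑ j, A i j ≤ 1)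
    {s u u' : ℕ} {i j : ι} {ε : ℝ} (hε0 : 0 ≤ ε)
    (hε : ∀ k ∉ T, dist ((A ^ u) k j) ((A ^ u') k j) ≤ ε) :
    dist ((A ^ (s + u)) i j) ((A ^ (s + u')) i j) ≤ ε + massOn A T s i := by
  have hterm : ∀ k, (A ^ s) i k * |(A ^ u) k j - (A ^ u') k j|
      ≤ (A ^ s) i k * ε + if k ∈ T then (A ^ s) i k else 0 := fun k => by
    have hs := pow_apply_nonneg h0 s i k
    split_ifs with hk
    · have hd := abs_sub_le_of_nonneg_of_le (pow_apply_nonneg h0 u k j)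
        (pow_apply_le_one h0 h1 u k j) (pow_apply_nonneg h0 u' k j) (pow_apply_le_one h0 h1 u' k j)
      linarith [mul_le_mul_of_nonneg_left hd hs, mul_nonneg hs hε0]
    · rw [add_zero, ← Real.dist_eq]
      exact mul_le_mul_of_nonneg_left (hε k hk) hs
  rw [Real.dist_eq, pow_add, pow_add, mul_apply, mul_apply, ← Finset.sum_sub_distrib]
  calc |∑ k, ((A ^ s) i k * (A ^ u) k j - (A ^ s) i k * (A ^ u') k j)|
      ≤ ∑ k, (A ^ s) i k * |(A ^ u) k j - (A ^ u') k j| := by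
        refine (Finset.abs_sum_le_sum_abs _ _).trans_eq (Finset.sum_congr rfl fun k _ => ?_)
        rw [← mul_sub, abs_mul, abs_of_nonneg (pow_apply_nonneg h0 s i k)]
    _ ≤ ∑ k, ((A ^ s) i k * ε + if k ∈ T then (A ^ s) i k else 0) :=
        Finset.sum_le_sum fun k _ => hterm k
    _ ≤ ε + massOn A T s i := by
        rw [Finset.sum_add_distrib, ← Finset.sum_mul, Finset.sum_ite_mem, Finset.univ_inter]
        exact add_le_add (mul_le_of_le_one_left hε0 (sum_pow_apply_le_one h0 h1 s i)) le_rfl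

theorem exists_tendsto_pow_apply_of_tendsto_massOn (h0 : ∀ i j, 0 ≤ A i j) (h1 : ∀ i, ∑ j, A i j ≤ 1)
    (hrow : ∀ k ∉ T, ∀ j, ∃ L, Tendsto (fun t => (A ^ t) k j) atTop (𝓝 L))
    (hT : ∀ i, Tendsto (fun t => massOn A T t i) atTop (𝓝 0)) (i j : ι) :
    ∃ L, Tendsto (fun t => (A ^ t) i j) atTop (𝓝 L) := by
  refine cauchySeq_tendsto_of_complete (Metric.cauchySeq_iff.2 fun ε hε => ?_)
  have hcauchy : ∀ᶠ p : ℕ × ℕ in atTop, ∀ k ∉ T, dist ((A ^ p.1) k j) ((A ^ p.2) k j) < ε / 2 := by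
    refine eventually_all.2 fun k => eventually_imp_distrib_left.2 fun hk => ?_
    obtain ⟨L, hL⟩ := hrow k hk j
    exact hL.cauchySeq.tendsto_uniformity (Metric.dist_mem_uniformity (half_pos hε))
  obtain ⟨U, hU⟩ := eventually_atTop_prod_self'.1 hcauchy
  obtain ⟨s, hs⟩ := eventually_atTop.1 ((hT i).eventually (gt_mem_nhds (half_pos hε)))
  refine ⟨s + U, fun m hm m' hm' => ?_⟩
  obtain ⟨u, rfl⟩ := Nat.exists_eq_add_of_le (le_of_add_le_left hm)
  obtain ⟨u', rfl⟩ := Nat.exists_eq_add_of_le (le_of_add_le_left hm')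
  calc dist ((A ^ (s + u)) i j) ((A ^ (s + u')) i j) ≤ ε / 2 + massOn A T s i :=
        dist_pow_add_apply_le h0 h1 (half_pos hε).le fun k hk =>
          (hU u (by omega) u' (by omega) k hk).le
    _ < ε := by linarith [hs s le_rfl]

end Leak

section Recurrent

variable {ι : Type*} [Fintype ι] {A : Matrix ι ι ℝ}

def recurrentSet (A : Matrix ι ι ℝ) : Set ι :=
  {k | ∃ W, IsSinkSCC (fun a b => A a b ≠ 0) W ∧ k ∈ W ∧ ∀ w ∈ W, ∑ j, A w j = 1}

theorem recurrentSet_closed {a b : ι} (ha : a ∈ recurrentSet A) (hab : A a b ≠ 0) :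
    b ∈ recurrentSet A :=
  let ⟨W, hW, haW, hstoch⟩ := ha
  ⟨W, hW, hW.2 a haW b hab, hstoch⟩

theorem exists_reflTransGen_recurrent_or_deficient (h1 : ∀ i, ∑ j, A i j ≤ 1) (i : ι) :
    ∃ v, ReflTransGen (fun a b => A a b ≠ 0) i v ∧ (v ∈ recurrentSet A ∨ ∑ j, A v j < 1) := by
  obtain ⟨W, hW, v, hvW, hiv⟩ := exists_isSinkSCC_reachable (fun a b => A a b ≠ 0) i
  by_cases hstoch : ∀ w ∈ W, ∑ j, A w j = 1
  · exact ⟨v, hiv, .inl ⟨W, hW, hvW, hstoch⟩⟩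
  · obtain ⟨w, hwW, hw⟩ : ∃ w ∈ W, ∑ j, A w j ≠ 1 := by simpa using hstoch
    exact ⟨w, hiv.trans (hW.1.2.1 v hvW w hwW), .inr ((h1 w).lt_of_ne hw)⟩

theorem IsSinkSCC.sum_row_eq_of_singleton {i : ι}
    (h : IsSinkSCC (fun a b => A a b ≠ 0) {i}) : ∑ j, A i j = A i i :=
  Fintype.sum_eq_single i fun j hj => by_contra fun hij => hj (h.2 i rfl j hij)

variable [DecidableEq ι]

theorem exists_tendsto_pow_apply_of_aperiodic (h0 : ∀ i j, 0 ≤ A i j) {W : Set ι}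
    (hW : IsSinkSCC (fun a b => A a b ≠ 0) W) (hstoch : ∀ w ∈ W, ∑ j, A w j = 1)
    (hgcd : ∀ d : ℕ,
      (∀ k, 0 < k → (∃ i ∈ W, WalkIn (fun a b => A a b ≠ 0) W k i i) → d ∣ k) → d = 1)
    {k : ι} (hk : k ∈ W) (j : ι) : ∃ L, Tendsto (fun t => (A ^ t) k j) atTop (𝓝 L) := by
  classical
  obtain ⟨N, hN⟩ := (eventually_walkIn_of_aperiodic hW hgcd).exists
  exact exists_tendsto_pow_apply_of_closed h0 hW.2 hstoch
    (fun k hk l hl => (hN k hk l hl).pow_apply_pos h0) hk j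

end Recurrent

theorem stmt5 {n : ℕ} (A : Matrix (Fin n) (Fin n) ℝ)
    (h0 : ∀ i j, 0 ≤ A i j) (h1 : ∀ i, ∑ j, A i j ≤ 1)
    (hap : ∀ W : Set (Fin n), IsSinkSCC (fun a b => A a b ≠ 0) W →
      ((∃ i, W = {i} ∧ A i i = 0) ∨
       ((∃ k, 0 < k ∧ ∃ i ∈ W, WalkIn (fun a b => A a b ≠ 0) W k i i) ∧
        (∀ d : ℕ,
          (∀ k, 0 < k → (∃ i ∈ W, WalkIn (fun a b => A a b ≠ 0) W k i i) → d ∣ k) →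
          d = 1)))) :
    ∃ M : Matrix (Fin n) (Fin n) ℝ,
      Tendsto (fun t : ℕ => A ^ t) atTop (nhds M) ∧
      (∀ i j, 0 ≤ M i j) ∧ (∀ i, ∑ j, M i j ≤ 1) := by
  classical
  set T := (recurrentSet A)ᶜ.toFinset
  have hrow : ∀ k ∉ T, ∀ j, ∃ L, Tendsto (fun t => (A ^ t) k j) atTop (𝓝 L) := by
    intro k hk j
    obtain ⟨W, hW, hkW, hstoch⟩ : k ∈ recurrentSet A := by simpa [T] using hk
    rcases hap W hW with ⟨i, rfl, hii⟩ | ⟨-, hgcd⟩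
    · exact absurd (hstoch i rfl) (by rw [hW.sum_row_eq_of_singleton, hii]; exact zero_ne_one)
    · exact exists_tendsto_pow_apply_of_aperiodic h0 hW hstoch hgcd hkW j
  have hmass := tendsto_massOn_zero (T := T) h0 h1
    (fun a ha b hab => by simpa [T] using recurrentSet_closed (by simpa [T] using ha) hab)
    (fun i _ => by simpa [T] using exists_reflTransGen_recurrent_or_deficient h1 i)
  choose L hL using exists_tendsto_pow_apply_of_tendsto_massOn h0 h1 hrow hmass
  exact ⟨L, tendsto_pi_nhds.2 fun i => tendsto_pi_nhds.2 (hL i),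
    fun i j => ge_of_tendsto' (hL i j) fun t => pow_apply_nonneg h0 t i j,
    fun i => le_of_tendsto' (tendsto_finsetSum _ fun j _ => hL i j)
      (sum_pow_apply_le_one h0 h1 · i)⟩
end

section
/- Consider the dynamics X_{t+1} = A_t X_t + E_t(σ̄ − X_t) in R^n, where each A_t is row-stochastic, each E_t is diagonal nonnegative, and σ̄ is a fixed point of every A_t. Suppose: (A1) there is T₁ with 0 ≤ E_t(i) ≤ A_t(i,i) for all t ≥ T₁ and all i; and (A3) the series ∑_t min_i E_t(i) diverges. Then X_t → σ̄ as t → ∞. -/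
open Filter Matrix

theorem stmt6 {n : ℕ} (hn : 0 < n)
    (A : ℕ → Matrix (Fin n) (Fin n) ℝ) (e : ℕ → Fin n → ℝ)
    (σb : Fin n → ℝ)
    (hA0 : ∀ t i j, 0 ≤ A t i j) (hA1 : ∀ t i, ∑ j, A t i j = 1)
    (he0 : ∀ t i, 0 ≤ e t i)
    (hfix : ∀ t, (A t) *ᵥ σb = σb)
    (X : ℕ → Fin n → ℝ)
    (hdyn : ∀ t, X (t + 1) = (A t) *ᵥ (X t) + (Matrix.diagonal (e t)) *ᵥ (σb - X t))
    (hA1' : ∃ T₁ : ℕ, ∀ t ≥ T₁, ∀ i, e t i ≤ A t i i)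
    (hA3 : Tendsto (fun T : ℕ => ∑ t ∈ Finset.range T, ⨅ i, e t i) atTop atTop) :
    Tendsto X atTop (nhds σb) := by
  have hne : Nonempty (Fin n) := ⟨⟨0, hn⟩⟩
  obtain ⟨T₁, hT₁⟩ := hA1'
  set ε : ℕ → ℝ := fun t => ⨅ i, e t i with hε
  have hbdd : ∀ t, BddBelow (Set.range (e t)) := fun t =>
    (Set.finite_range (e t)).bddBelow
  have hε_le : ∀ t i, ε t ≤ e t i := fun t i => ciInf_le (hbdd t) i
  have hε0 : ∀ t, 0 ≤ ε t := fun t => le_ciInf (fun i => he0 t i)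
  -- each e t i ≤ 1 for t ≥ T₁
  have he_le_one : ∀ t ≥ T₁, ∀ i, e t i ≤ 1 := by
    intro t ht i
    refine le_trans (hT₁ t ht i) ?_
    calc A t i i ≤ ∑ j, A t i j :=
          Finset.single_le_sum (fun j _ => hA0 t i j) (Finset.mem_univ i)
      _ = 1 := hA1 t i
  have hε_le_one : ∀ t ≥ T₁, ε t ≤ 1 :=
    fun t ht => le_trans (hε_le t ⟨0, hn⟩) (he_le_one t ht ⟨0, hn⟩)
  set Y : ℕ → Fin n → ℝ := fun t => X t - σb with hY
  have hMnonneg : ∀ t, 0 ≤ ‖Y t‖ := fun t => norm_nonneg _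
  -- key recursion
  have key : ∀ t ≥ T₁, ‖Y (t + 1)‖ ≤ (1 - ε t) * ‖Y t‖ := by
    intro t ht
    have h1ε : 0 ≤ 1 - ε t := by linarith [hε_le_one t ht]
    rw [pi_norm_le_iff_of_nonneg (by positivity)]
    intro i
    -- coefficients
    set c : Fin n → ℝ := fun j => A t i j - (if j = i then e t i else 0) with hc
    have hc0 : ∀ j, 0 ≤ c j := by
      intro j
      by_cases h : j = i
      · subst h; simp [hc, sub_nonneg]; exact hT₁ t ht j
      · simp [hc, h]; exact hA0 t i j
    have hcsum : ∑ j, c j = 1 - e t i := by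
      simp [hc, Finset.sum_sub_distrib, hA1 t i]
    have hYi : Y (t + 1) i = ∑ j, c j * Y t j := by
      have hX : X (t + 1) i = (∑ j, A t i j * X t j) + e t i * (σb i - X t i) := by
        rw [hdyn t]
        simp only [Pi.add_apply, Matrix.mulVec_diagonal, Pi.sub_apply]
        simp [Matrix.mulVec, dotProduct]
      have hσ : σb i = ∑ j, A t i j * σb j := by
        conv_lhs => rw [← hfix t]
        simp [Matrix.mulVec, dotProduct]
      have hsplit : ∑ j, A t i j * (X t j - σb j) = (∑ j, A t i j * X t j) - σb i := by
        simp only [mul_sub, Finset.sum_sub_distrib]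
        rw [← hσ]
      have : Y (t + 1) i = (∑ j, A t i j * (X t j - σb j)) - e t i * (X t i - σb i) := by
        simp only [hY, Pi.sub_apply, hX, hsplit]
        ring
      rw [this]
      simp only [hc, sub_mul, ite_mul, zero_mul, Finset.sum_sub_distrib,
        Finset.sum_ite_eq' Finset.univ i]
      simp [hY]
    rw [hYi]
    calc ‖∑ j, c j * Y t j‖ ≤ ∑ j, ‖c j * Y t j‖ := norm_sum_le _ _
      _ = ∑ j, c j * ‖Y t j‖ := by
          refine Finset.sum_congr rfl fun j _ => ?_
          rw [norm_mul, Real.norm_of_nonneg (hc0 j)]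
      _ ≤ ∑ j, c j * ‖Y t‖ := by
          refine Finset.sum_le_sum fun j _ => ?_
          exact mul_le_mul_of_nonneg_left (norm_le_pi_norm (Y t) j) (hc0 j)
      _ = (1 - e t i) * ‖Y t‖ := by rw [← Finset.sum_mul, hcsum]
      _ ≤ (1 - ε t) * ‖Y t‖ := by
          apply mul_le_mul_of_nonneg_right _ (hMnonneg t)
          linarith [hε_le t i]
  -- iterate
  have iter : ∀ k : ℕ, ‖Y (T₁ + k)‖ ≤
      ‖Y T₁‖ * ∏ t ∈ Finset.range k, (1 - ε (T₁ + t)) := by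
    intro k
    induction k with
    | zero => simp
    | succ k ih =>
      have h1 : 0 ≤ 1 - ε (T₁ + k) := by
        linarith [hε_le_one (T₁ + k) (Nat.le_add_right _ _)]
      calc ‖Y (T₁ + (k + 1))‖ ≤ (1 - ε (T₁ + k)) * ‖Y (T₁ + k)‖ :=
            key _ (Nat.le_add_right _ _)
        _ ≤ (1 - ε (T₁ + k)) * (‖Y T₁‖ * ∏ t ∈ Finset.range k, (1 - ε (T₁ + t))) :=
            mul_le_mul_of_nonneg_left ih h1
        _ = ‖Y T₁‖ * ∏ t ∈ Finset.range (k + 1), (1 - ε (T₁ + t)) := by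
            rw [Finset.prod_range_succ]; ring
  -- bound product by exp of minus partial sum
  have prod_le : ∀ k : ℕ, ∏ t ∈ Finset.range k, (1 - ε (T₁ + t)) ≤
      Real.exp (-(∑ t ∈ Finset.range k, ε (T₁ + t))) := by
    intro k
    calc ∏ t ∈ Finset.range k, (1 - ε (T₁ + t))
        ≤ ∏ t ∈ Finset.range k, Real.exp (-(ε (T₁ + t))) := by
          refine Finset.prod_le_prod ?_ ?_
          · intro t _
            linarith [hε_le_one (T₁ + t) (Nat.le_add_right _ _)]
          · intro t _
            have := Real.add_one_le_exp (-(ε (T₁ + t)))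
            linarith
      _ = Real.exp (∑ t ∈ Finset.range k, -(ε (T₁ + t))) := (Real.exp_sum _ _).symm
      _ = Real.exp (-(∑ t ∈ Finset.range k, ε (T₁ + t))) := by
          rw [Finset.sum_neg_distrib]
  -- the partial sums tend to infinity
  have hsum : Tendsto (fun k : ℕ => ∑ t ∈ Finset.range k, ε (T₁ + t)) atTop atTop := by
    have h1 : Tendsto (fun k : ℕ => ∑ t ∈ Finset.range (k + T₁), ε t) atTop atTop :=
      hA3.comp (tendsto_add_atTop_nat T₁)
    have h2 : ∀ k : ℕ, ∑ t ∈ Finset.range k, ε (T₁ + t) =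
        (∑ t ∈ Finset.range (k + T₁), ε t) - ∑ t ∈ Finset.range T₁, ε t := by
      intro k
      rw [add_comm k T₁, Finset.sum_range_add]
      ring
    simp only [h2]
    exact tendsto_atTop_add_const_right atTop _ h1
  -- conclude norms tend to zero
  have hnorm0 : Tendsto (fun k : ℕ => ‖Y (T₁ + k)‖) atTop (nhds 0) := by
    have hup : Tendsto (fun k : ℕ =>
        ‖Y T₁‖ * Real.exp (-(∑ t ∈ Finset.range k, ε (T₁ + t)))) atTop (nhds 0) := by
      have : Tendsto (fun k : ℕ =>
          Real.exp (-(∑ t ∈ Finset.range k, ε (T₁ + t)))) atTop (nhds 0) :=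
        Real.tendsto_exp_atBot.comp (tendsto_neg_atTop_atBot.comp hsum)
      simpa using this.const_mul ‖Y T₁‖
    refine squeeze_zero (fun k => hMnonneg _) (fun k => ?_) hup
    exact le_trans (iter k) (mul_le_mul_of_nonneg_left (prod_le k) (hMnonneg T₁))
  have hnorm0' : Tendsto (fun t : ℕ => ‖Y t‖) atTop (nhds 0) := by
    rw [← tendsto_add_atTop_iff_nat T₁]
    simpa [add_comm] using hnorm0
  rw [tendsto_iff_norm_sub_tendsto_zero]
  exact hnorm0'
end

section
/- Let n ≥ 1 and let 0 ≤ τ' < τ ≤ n be real. Let (A_t) be row-stochastic matrices and (E_t) diagonal nonnegative matrices with B_t := A_t − E_t, and set V_t(i) = |A_t(i,i) − E_t(i)|. Suppose for every t: tr(A_t) − ∑_i V_t(i) ≥ τ and |B_t(i,j)| ≤ 1/(n − τ') for all i,j. Then for any initial Y_0, the iterates Y_{t+1} = B_t Y_t satisfy Y_t → 0, with the two-step bound ‖Y_{t+2}‖_∞ ≤ ((n−τ)/(n−τ')) · ‖Y_t‖_∞. -/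
open Filter Matrix

theorem stmt11 {n : ℕ} (hn : 0 < n) (τ τ' : ℝ)
    (hτ'0 : 0 ≤ τ') (hτ'τ : τ' < τ) (hτn : τ ≤ n)
    (A : ℕ → Matrix (Fin n) (Fin n) ℝ) (e : ℕ → Fin n → ℝ)
    (hA0 : ∀ t i j, 0 ≤ A t i j) (hA1 : ∀ t i, ∑ j, A t i j = 1)
    (he0 : ∀ t i, 0 ≤ e t i)
    (htr : ∀ t : ℕ, τ ≤ Matrix.trace (A t) - ∑ i, |A t i i - e t i|)
    (hB : ∀ t i j, |(A t - Matrix.diagonal (e t)) i j| ≤ 1 / ((n : ℝ) - τ'))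
    (Y : ℕ → Fin n → ℝ)
    (hdyn : ∀ t, Y (t + 1) = (A t - Matrix.diagonal (e t)) *ᵥ Y t) :
    Tendsto Y atTop (nhds 0) ∧
      ∀ t, ‖Y (t + 2)‖ ≤ (((n : ℝ) - τ) / ((n : ℝ) - τ')) * ‖Y t‖ := by
  set B : ℕ → Matrix (Fin n) (Fin n) ℝ := fun t => A t - Matrix.diagonal (e t) with hBdef
  set c : ℝ := ((n : ℝ) - τ) / ((n : ℝ) - τ') with hcdef
  have hden : (0 : ℝ) < (n : ℝ) - τ' := by linarith
  have hnum : (0 : ℝ) ≤ (n : ℝ) - τ := by linarith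
  have hc0 : 0 ≤ c := div_nonneg hnum hden.le
  have hc1 : c < 1 := by
    rw [hcdef, div_lt_one hden]; linarith
  -- row sums of |B t|
  have hrow : ∀ t j, ∑ k, |B t j k| = |A t j j - e t j| + (1 - A t j j) := by
    intro t j
    have hBjj : B t j j = A t j j - e t j := by
      simp [hBdef, Matrix.sub_apply, Matrix.diagonal_apply_eq]
    have hBoff : ∀ k, k ≠ j → |B t j k| = A t j k := by
      intro k hk
      have : B t j k = A t j k := by
        simp [hBdef, Matrix.sub_apply, Matrix.diagonal_apply_ne' _ hk]
      rw [this, abs_of_nonneg (hA0 t j k)]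
    rw [← Finset.add_sum_erase _ _ (Finset.mem_univ j), hBjj]
    congr 1
    have hsum : ∑ k ∈ Finset.univ.erase j, |B t j k|
        = ∑ k ∈ Finset.univ.erase j, A t j k := by
      apply Finset.sum_congr rfl
      intro k hk
      exact hBoff k (Finset.ne_of_mem_erase hk)
    rw [hsum]
    have := hA1 t j
    rw [← Finset.add_sum_erase _ _ (Finset.mem_univ j)] at this
    linarith
  -- total sum bound
  have htot : ∀ t, ∑ j, ∑ k, |B t j k| ≤ (n : ℝ) - τ := by
    intro t
    have : ∑ j, ∑ k, |B t j k|
        = (∑ j, |A t j j - e t j|) + ((n : ℝ) - Matrix.trace (A t)) := by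
      simp only [hrow]
      rw [Finset.sum_add_distrib, Finset.sum_sub_distrib]
      simp [Matrix.trace, Matrix.diag, Finset.card_univ]
    rw [this]
    have := htr t
    linarith
  have hYnn : ∀ t (k : Fin n), |Y t k| ≤ ‖Y t‖ := by
    intro t k
    simpa [Real.norm_eq_abs] using norm_le_pi_norm (Y t) k
  -- sum of abs of next iterate
  have hx : ∀ t, ∑ j, |Y (t + 1) j| ≤ ((n : ℝ) - τ) * ‖Y t‖ := by
    intro t
    have h1 : ∀ j, |Y (t + 1) j| ≤ (∑ k, |B t j k|) * ‖Y t‖ := by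
      intro j
      rw [hdyn t]
      calc |(B t *ᵥ Y t) j| = |∑ k, B t j k * Y t k| := by
            simp [Matrix.mulVec, dotProduct]
        _ ≤ ∑ k, |B t j k * Y t k| := Finset.abs_sum_le_sum_abs _ _
        _ = ∑ k, |B t j k| * |Y t k| := by simp [abs_mul]
        _ ≤ ∑ k, |B t j k| * ‖Y t‖ := by
            apply Finset.sum_le_sum
            intro k _
            exact mul_le_mul_of_nonneg_left (hYnn t k) (abs_nonneg _)
        _ = (∑ k, |B t j k|) * ‖Y t‖ := (Finset.sum_mul _ _ _).symm
    calc ∑ j, |Y (t + 1) j| ≤ ∑ j, (∑ k, |B t j k|) * ‖Y t‖ :=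
          Finset.sum_le_sum fun j _ => h1 j
      _ = (∑ j, ∑ k, |B t j k|) * ‖Y t‖ := (Finset.sum_mul _ _ _).symm
      _ ≤ ((n : ℝ) - τ) * ‖Y t‖ :=
          mul_le_mul_of_nonneg_right (htot t) (norm_nonneg _)
  -- two-step contraction
  have key : ∀ t, ‖Y (t + 2)‖ ≤ c * ‖Y t‖ := by
    intro t
    have hcY : 0 ≤ c * ‖Y t‖ := mul_nonneg hc0 (norm_nonneg _)
    rw [pi_norm_le_iff_of_nonneg hcY]
    intro i
    rw [Real.norm_eq_abs]
    have h2 : Y (t + 2) = B (t + 1) *ᵥ Y (t + 1) := hdyn (t + 1)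
    calc |Y (t + 2) i| = |∑ j, B (t + 1) i j * Y (t + 1) j| := by
          rw [h2]; simp [Matrix.mulVec, dotProduct]
      _ ≤ ∑ j, |B (t + 1) i j * Y (t + 1) j| := Finset.abs_sum_le_sum_abs _ _
      _ = ∑ j, |B (t + 1) i j| * |Y (t + 1) j| := by simp [abs_mul]
      _ ≤ ∑ j, (1 / ((n : ℝ) - τ')) * |Y (t + 1) j| := by
          apply Finset.sum_le_sum
          intro j _
          exact mul_le_mul_of_nonneg_right (hB (t + 1) i j) (abs_nonneg _)
      _ = (1 / ((n : ℝ) - τ')) * ∑ j, |Y (t + 1) j| := by rw [Finset.mul_sum]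
      _ ≤ (1 / ((n : ℝ) - τ')) * (((n : ℝ) - τ) * ‖Y t‖) := by
          apply mul_le_mul_of_nonneg_left (hx t)
          positivity
      _ = c * ‖Y t‖ := by
          rw [hcdef]; field_simp
  refine ⟨?_, key⟩
  -- even/odd iterate bounds
  have h2m : ∀ m, ‖Y (2 * m)‖ ≤ c ^ m * ‖Y 0‖ ∧ ‖Y (2 * m + 1)‖ ≤ c ^ m * ‖Y 1‖ := by
    intro m
    induction m with
    | zero => simp
    | succ m ih =>
      constructor
      · have : 2 * (m + 1) = 2 * m + 2 := by ring
        rw [this]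
        calc ‖Y (2 * m + 2)‖ ≤ c * ‖Y (2 * m)‖ := key _
          _ ≤ c * (c ^ m * ‖Y 0‖) := mul_le_mul_of_nonneg_left ih.1 hc0
          _ = c ^ (m + 1) * ‖Y 0‖ := by ring
      · have : 2 * (m + 1) + 1 = (2 * m + 1) + 2 := by ring
        rw [this]
        calc ‖Y ((2 * m + 1) + 2)‖ ≤ c * ‖Y (2 * m + 1)‖ := key _
          _ ≤ c * (c ^ m * ‖Y 1‖) := mul_le_mul_of_nonneg_left ih.2 hc0
          _ = c ^ (m + 1) * ‖Y 1‖ := by ring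
  set M : ℝ := max ‖Y 0‖ ‖Y 1‖ with hM
  have hbound : ∀ t, ‖Y t‖ ≤ c ^ (t / 2) * M := by
    intro t
    have hpow : (0 : ℝ) ≤ c ^ (t / 2) := pow_nonneg hc0 _
    rcases Nat.even_or_odd t with ⟨m, hm⟩ | ⟨m, hm⟩
    · have ht : t = 2 * m := by omega
      have hd : t / 2 = m := by omega
      rw [hd, ht]
      calc ‖Y (2 * m)‖ ≤ c ^ m * ‖Y 0‖ := (h2m m).1
        _ ≤ c ^ m * M := mul_le_mul_of_nonneg_left (le_max_left _ _) (pow_nonneg hc0 _)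
    · have ht : t = 2 * m + 1 := by omega
      have hd : t / 2 = m := by omega
      rw [hd, ht]
      calc ‖Y (2 * m + 1)‖ ≤ c ^ m * ‖Y 1‖ := (h2m m).2
        _ ≤ c ^ m * M := mul_le_mul_of_nonneg_left (le_max_right _ _) (pow_nonneg hc0 _)
  have hdiv : Tendsto (fun t : ℕ => t / 2) atTop atTop :=
    Filter.tendsto_atTop_atTop.2 fun b => ⟨2 * b, fun t ht => by omega⟩
  have hg : Tendsto (fun t : ℕ => c ^ (t / 2) * M) atTop (nhds 0) := by
    have := ((tendsto_pow_atTop_nhds_zero_of_lt_one hc0 hc1).comp hdiv).mul_const M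
    simpa using this
  have hnorm : Tendsto (fun t => ‖Y t‖) atTop (nhds 0) :=
    squeeze_zero (fun t => norm_nonneg _) hbound hg
  exact tendsto_zero_iff_norm_tendsto_zero.mpr hnorm
end

section
/- Let (ρ_t)_{t≥1} be nonnegative reals and Λ_t := ρ_t + ρ_t ρ_{t−1} + … + ρ_t ρ_{t−1}⋯ρ_1, with Λ_0 := 0. If sup_{t≥1} Λ_t ≤ Λ < ∞, then setting c := log(1 + 1/Λ) and K := 1 + Λ, for all 0 ≤ s < t one has ∏_{i=s+1}^{t} ρ_i ≤ K e^{−c(t−s)}. Conversely, if ∏_{i=s+1}^{t} ρ_i ≤ K e^{−c(t−s)} for all 0 ≤ s < t with some K, c > 0, then sup_{t≥1} Λ_t ≤ K/(e^c − 1). -/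
open Finset

private lemma lam_shift (ρ : ℕ → ℝ) (t : ℕ) :
    (∑ k ∈ Finset.Icc 1 t, ∏ i ∈ Finset.Icc (t - k + 1) t, ρ i)
      = ∑ j ∈ Finset.range t, ∏ i ∈ Finset.Icc (t - j) t, ρ i := by
  apply Finset.sum_nbij' (fun k => k - 1) (fun j => j + 1)
  · intro k hk; simp at hk ⊢; omega
  · intro j hj; simp at hj ⊢; omega
  · intro k hk; simp at hk; omega
  · intro j hj; simp
  · intro k hk; simp at hk
    have : t - (k - 1) = t - k + 1 := by omega
    rw [this]

private lemma lam_rec (ρ : ℕ → ℝ) (t : ℕ) :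
    (∑ k ∈ Finset.Icc 1 (t + 1), ∏ i ∈ Finset.Icc (t + 1 - k + 1) (t + 1), ρ i)
      = ρ (t + 1) * (1 + ∑ k ∈ Finset.Icc 1 t, ∏ i ∈ Finset.Icc (t - k + 1) t, ρ i) := by
  rw [lam_shift, lam_shift]
  have h1 : ∀ j ∈ Finset.range (t + 1),
      (∏ i ∈ Finset.Icc (t + 1 - j) (t + 1), ρ i)
        = (∏ i ∈ Finset.Icc (t + 1 - j) t, ρ i) * ρ (t + 1) := by
    intro j hj
    exact Finset.prod_Icc_succ_top (by omega) _
  rw [Finset.sum_congr rfl h1, ← Finset.sum_mul, Finset.sum_range_succ']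
  have h0 : (∏ i ∈ Finset.Icc (t + 1 - 0) t, ρ i) = 1 := by
    rw [Finset.Icc_eq_empty (by omega)]; simp
  have h2 : ∀ i, t + 1 - (i + 1) = t - i := by intro i; omega
  simp only [h0, h2]
  ring

private lemma lam_nonneg (ρ : ℕ → ℝ) (hρ : ∀ t, 0 ≤ ρ t) (t : ℕ) :
    0 ≤ ∑ k ∈ Finset.Icc 1 t, ∏ i ∈ Finset.Icc (t - k + 1) t, ρ i := by
  apply Finset.sum_nonneg
  intro k _
  exact Finset.prod_nonneg fun i _ => hρ i

theorem stmt12 (ρ : ℕ → ℝ) (hρ : ∀ t, 0 ≤ ρ t) :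
    (∀ Λ : ℝ, 0 < Λ →
      (∀ t : ℕ, 1 ≤ t →
        (∑ k ∈ Finset.Icc 1 t, ∏ i ∈ Finset.Icc (t - k + 1) t, ρ i) ≤ Λ) →
      ∀ s t : ℕ, s < t →
        ∏ i ∈ Finset.Icc (s + 1) t, ρ i ≤
          (1 + Λ) * Real.exp (-(Real.log (1 + 1 / Λ)) * ((t : ℝ) - (s : ℝ)))) ∧
    (∀ K c : ℝ, 0 < K → 0 < c →
      (∀ s t : ℕ, s < t →
        ∏ i ∈ Finset.Icc (s + 1) t, ρ i ≤ K * Real.exp (-c * ((t : ℝ) - (s : ℝ)))) →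
      ∀ t : ℕ, 1 ≤ t →
        (∑ k ∈ Finset.Icc 1 t, ∏ i ∈ Finset.Icc (t - k + 1) t, ρ i) ≤
          K / (Real.exp c - 1)) := by
  set L : ℕ → ℝ := fun t => ∑ k ∈ Finset.Icc 1 t, ∏ i ∈ Finset.Icc (t - k + 1) t, ρ i
    with hLdef
  have hL0 : L 0 = 0 := by simp [hLdef]
  have hLnn : ∀ t, 0 ≤ L t := lam_nonneg ρ hρ
  have hrec : ∀ t, L (t + 1) = ρ (t + 1) * (1 + L t) := lam_rec ρ
  constructor
  · -- forward direction
    intro Λ hΛ hsup s t hst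
    have hLle : ∀ u, L u ≤ Λ := by
      intro u
      rcases Nat.eq_zero_or_pos u with h | h
      · rw [h, hL0]; exact hΛ.le
      · exact hsup u h
    set r : ℝ := Λ / (1 + Λ) with hr
    have h1Λ : (0:ℝ) < 1 + Λ := by linarith
    have hr0 : 0 ≤ r := div_nonneg hΛ.le h1Λ.le
    -- ratio bound
    have hratio : ∀ u, L u / (1 + L u) ≤ r := by
      intro u
      rw [hr, div_le_div_iff₀ (by linarith [hLnn u]) h1Λ]
      nlinarith [hLle u, hLnn u]
    -- key induction
    have key : ∀ n s : ℕ, ∏ i ∈ Finset.Icc (s + 1) (s + 1 + n), ρ i ≤ L (s + 1 + n) * r ^ n := by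
      intro n
      induction n with
      | zero =>
        intro s
        simp only [Nat.add_zero, pow_zero, mul_one, Finset.Icc_self, Finset.prod_singleton]
        rw [hrec s]
        nlinarith [hρ (s + 1), hLnn s]
      | succ n ih =>
        intro s
        have hT : s + 1 + (n + 1) = (s + 1 + n) + 1 := by omega
        rw [hT, Finset.prod_Icc_succ_top (by omega)]
        have h1 : (0:ℝ) < 1 + L (s + 1 + n) := by linarith [hLnn (s + 1 + n)]
        have hρeq : ρ (s + 1 + n + 1) = L (s + 1 + n + 1) / (1 + L (s + 1 + n)) := by
          rw [hrec (s + 1 + n)]; field_simp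
        have hb : (∏ i ∈ Finset.Icc (s + 1) (s + 1 + n), ρ i) * ρ (s + 1 + n + 1)
            ≤ (L (s + 1 + n) * r ^ n) * ρ (s + 1 + n + 1) := by
          apply mul_le_mul_of_nonneg_right (ih s) (hρ _)
        refine hb.trans ?_
        rw [hρeq, pow_succ]
        have : L (s + 1 + n) * r ^ n * (L (s + 1 + n + 1) / (1 + L (s + 1 + n)))
            = (L (s + 1 + n) / (1 + L (s + 1 + n))) * L (s + 1 + n + 1) * r ^ n := by
          ring
        rw [this]
        have := hratio (s + 1 + n)
        nlinarith [hLnn (s + 1 + n + 1), hratio (s + 1 + n), pow_nonneg hr0 n,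
          mul_le_mul_of_nonneg_right (hratio (s + 1 + n))
            (mul_nonneg (hLnn (s + 1 + n + 1)) (pow_nonneg hr0 n))]
    -- apply with n = t - s - 1
    obtain ⟨n, hn⟩ : ∃ n, t = s + 1 + n := ⟨t - s - 1, by omega⟩
    subst hn
    have h1 := (key n s).trans (by
      have := hLle (s + 1 + n)
      nlinarith [pow_nonneg hr0 n] : L (s + 1 + n) * r ^ n ≤ Λ * r ^ n)
    -- Λ * r ^ n = (1 + Λ) * r ^ (n+1)
    have hΛr : Λ * r ^ n = (1 + Λ) * r ^ (n + 1) := by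
      rw [pow_succ, hr]; field_simp
    -- exp(-c * (t - s)) = r ^ (n+1)
    have hcast : ((s : ℝ) + 1 + n) - s = (n : ℝ) + 1 := by push_cast; ring
    have hrexp : Real.exp (-(Real.log (1 + 1 / Λ)) * ((n : ℝ) + 1)) = r ^ (n + 1) := by
      have h11 : (0:ℝ) < 1 + 1 / Λ := by positivity
      have hre : Real.exp (-(Real.log (1 + 1 / Λ))) = r := by
        rw [Real.exp_neg, Real.exp_log h11, hr]
        rw [one_add_div hΛ.ne', inv_div]
        ring_nf
      have : -(Real.log (1 + 1 / Λ)) * ((n : ℝ) + 1)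
          = ((n + 1 : ℕ) : ℝ) * (-(Real.log (1 + 1 / Λ))) := by push_cast; ring
      rw [this, Real.exp_nat_mul, hre]
    push_cast
    rw [show ((s : ℝ) + 1 + (n:ℝ)) - (s:ℝ) = (n : ℝ) + 1 by ring] at *
    rw [hrexp, ← hΛr]
    exact h1
  · -- converse direction
    intro K c hK hc hbd t ht
    set x : ℝ := Real.exp (-c) with hx
    have hx0 : 0 < x := Real.exp_pos _
    have hx1 : x < 1 := by
      rw [hx]; exact Real.exp_lt_one_iff.mpr (by linarith)
    have hterm : ∀ k ∈ Finset.Icc 1 t, (∏ i ∈ Finset.Icc (t - k + 1) t, ρ i) ≤ K * x ^ k := by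
      intro k hk
      simp only [Finset.mem_Icc] at hk
      have hs : t - k < t := by omega
      have := hbd (t - k) t hs
      have hc1 : (t : ℝ) - ((t - k : ℕ) : ℝ) = (k : ℝ) := by
        rw [Nat.cast_sub hk.2]; ring
      rw [hc1] at this
      have hxk : Real.exp (-c * (k : ℝ)) = x ^ k := by
        rw [hx, ← Real.exp_nat_mul]; ring_nf
      rw [hxk] at this
      have : t - k + 1 = (t - k) + 1 := rfl
      exact this ▸ (hbd (t - k) t hs).trans_eq (by rw [hc1, hxk])
    calc (∑ k ∈ Finset.Icc 1 t, ∏ i ∈ Finset.Icc (t - k + 1) t, ρ i)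
        ≤ ∑ k ∈ Finset.Icc 1 t, K * x ^ k := Finset.sum_le_sum hterm
      _ = K * ∑ k ∈ Finset.Icc 1 t, x ^ k := by rw [Finset.mul_sum]
      _ ≤ K / (Real.exp c - 1) := by
          have hgeom : ∑ k ∈ Finset.Icc 1 t, x ^ k ≤ x / (1 - x) := by
            have h1 : ∑ k ∈ Finset.Icc 1 t, x ^ k = (∑ k ∈ Finset.range (t + 1), x ^ k) - 1 := by
              have : Finset.Icc 1 t = Finset.Ico 1 (t + 1) := (Finset.Ico_add_one_right_eq_Icc 1 t).symm
              rw [this, Finset.range_eq_Ico, Finset.sum_Ico_eq_sub _ (by omega)]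
              simp
            rw [h1, geom_sum_eq (by linarith : x ≠ 1)]
            have heq : (x ^ (t + 1) - 1) / (x - 1) - 1 = (x - x ^ (t + 1)) / (1 - x) := by
              have h : x - 1 ≠ 0 := by linarith
              have h2 : (1:ℝ) - x ≠ 0 := by linarith
              field_simp
              ring
            rw [heq]
            have hxt : 0 ≤ x ^ (t + 1) := pow_nonneg hx0.le _
            gcongr <;> linarith
          have hec : 1 < Real.exp c := by
            rw [← Real.exp_zero]; exact Real.exp_lt_exp.mpr hc
          have hxe : x * Real.exp c = 1 := by
            rw [hx, ← Real.exp_add]; simp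
          have h2 : K * (x / (1 - x)) ≤ K / (Real.exp c - 1) := by
            rw [mul_div_assoc' K x (1 - x), div_le_div_iff₀ (by linarith) (by linarith)]
            nlinarith
          calc K * ∑ k ∈ Finset.Icc 1 t, x ^ k
              ≤ K * (x / (1 - x)) := by
                apply mul_le_mul_of_nonneg_left hgeom hK.le
            _ ≤ K / (Real.exp c - 1) := h2
end

section
/- Let A be an n×n row-stochastic matrix and E diagonal nonnegative. Suppose there is an index i with E(i) ≥ 2, and for all j ≠ i one has 0 ≤ E(j) < 2·A(j,j). Then the spectral radius of A − E is at least 1. -/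
open Matrix
open scoped ENNReal

open Finset in
private lemma det_mul_prod_diag_pos {n : ℕ} (M : Matrix (Fin n) (Fin n) ℝ)
    (h : ∀ k, ∑ j ∈ Finset.univ.erase k, |M k j| < |M k k|) :
    0 < M.det * ∏ k, M k k := by
  set f : ℝ → Matrix (Fin n) (Fin n) ℝ :=
    fun s => Matrix.of fun k j => if k = j then M k k else s * M k j with hf
  have hdom : ∀ s ∈ Set.Icc (0:ℝ) 1, ∀ k,
      ∑ j ∈ Finset.univ.erase k, ‖f s k j‖ < ‖f s k k‖ := by
    intro s hs k
    have h1 : ‖f s k k‖ = |M k k| := by simp [hf]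
    rw [h1]
    refine lt_of_le_of_lt ?_ (h k)
    apply Finset.sum_le_sum
    intro j hj
    have hjk : k ≠ j := fun hkj => (Finset.mem_erase.mp hj).1 hkj.symm
    simp only [hf, Matrix.of_apply, if_neg hjk, Real.norm_eq_abs, abs_mul]
    calc |s| * |M k j| ≤ 1 * |M k j| := by
          apply mul_le_mul_of_nonneg_right _ (abs_nonneg _)
          rw [abs_le]; exact ⟨le_trans (by norm_num) hs.1, hs.2⟩
      _ = |M k j| := one_mul _
  have hne : ∀ s ∈ Set.Icc (0:ℝ) 1, (f s).det ≠ 0 := fun s hs =>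
    det_ne_zero_of_sum_row_lt_diag (hdom s hs)
  have h0 : (f 0).det = ∏ k, M k k := by
    have : f 0 = Matrix.diagonal (fun k => M k k) := by
      ext k j
      by_cases hkj : k = j <;> simp [hf, Matrix.diagonal, hkj]
    rw [this, Matrix.det_diagonal]
  have h1 : f 1 = M := by ext k j; by_cases hkj : k = j <;> simp [hf, hkj]
  have hcont : Continuous fun s => (f s).det := by
    apply Continuous.matrix_det
    apply continuous_matrix
    intro k j
    by_cases hkj : k = j
    · simp only [hf, Matrix.of_apply, if_pos hkj]; exact continuous_const
    · simp only [hf, Matrix.of_apply, if_neg hkj]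
      exact continuous_id.mul continuous_const
  -- prod diag nonzero
  by_contra hle
  push_neg at hle
  have hMdet : M.det ≠ 0 := by
    rw [← h1]; exact hne 1 (by norm_num)
  have hprod : (∏ k, M k k) ≠ 0 := by
    rw [← h0]; exact hne 0 (by norm_num)
  have hneg : M.det * ∏ k, M k k < 0 :=
    lt_of_le_of_ne hle (mul_ne_zero hMdet hprod)
  -- opposite signs: 0 ∈ uIcc (det (f 0)) (det (f 1))
  have hmem : (0:ℝ) ∈ Set.uIcc ((f 0).det) ((f 1).det) := by
    rw [h0, h1]
    rcases mul_neg_iff.mp hneg with ⟨ha, hb⟩ | ⟨ha, hb⟩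
    · exact Set.mem_uIcc.mpr (Or.inl ⟨le_of_lt hb, le_of_lt ha⟩)
    · exact Set.mem_uIcc.mpr (Or.inr ⟨le_of_lt ha, le_of_lt hb⟩)
  obtain ⟨s, hs, hzero⟩ := intermediate_value_uIcc (a := (0:ℝ)) (b := 1)
    (hcont.continuousOn (s := Set.uIcc 0 1)) hmem
  rw [Set.uIcc_of_le (by norm_num : (0:ℝ) ≤ 1)] at hs
  exact hne s hs hzero

open Finset in
theorem stmt15 {n : ℕ} (A : Matrix (Fin n) (Fin n) ℝ) (e : Fin n → ℝ)
    (hA0 : ∀ i j, 0 ≤ A i j) (hA1 : ∀ i, ∑ j, A i j = 1)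
    (he0 : ∀ i, 0 ≤ e i)
    (hi : ∃ i, 2 ≤ e i ∧ ∀ j, j ≠ i → e j < 2 * A j j) :
    (1 : ℝ≥0∞) ≤
      spectralRadius ℂ ((A - Matrix.diagonal e).map (fun x => (x : ℂ))) := by
  obtain ⟨i, hei, hji⟩ := hi
  -- basic facts
  have hAle1 : ∀ k, A k k ≤ 1 := fun k =>
    (hA1 k) ▸ Finset.single_le_sum (fun j _ => hA0 k j) (Finset.mem_univ k)
  have hrow : ∀ k, ∑ j ∈ Finset.univ.erase k, |A k j| = 1 - A k k := by
    intro k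
    have : ∑ j ∈ Finset.univ.erase k, |A k j| = ∑ j ∈ Finset.univ.erase k, A k j := by
      exact Finset.sum_congr rfl fun j _ => abs_of_nonneg (hA0 k j)
    rw [this, Finset.sum_erase_eq_sub (Finset.mem_univ k), hA1 k]
  set B : Matrix (Fin n) (Fin n) ℝ := A - Matrix.diagonal e with hB
  -- the perturbed family
  set D : ℝ → Matrix (Fin n) (Fin n) ℝ := fun ε =>
    A + 1 - Matrix.diagonal (fun k => if k = i then e i + ε else e k) with hD
  have hDentry_off : ∀ ε, ∀ k j, k ≠ j → D ε k j = A k j := by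
    intro ε k j hkj
    simp [hD, Matrix.one_apply_ne hkj, Matrix.diagonal_apply_ne _ hkj]
  have hDentry_diag : ∀ ε k, D ε k k = A k k + 1 - (if k = i then e i + ε else e k) := by
    intro ε k
    simp [hD, Matrix.one_apply_eq]
  have hDneg : ∀ ε : ℝ, 0 < ε → (D ε).det < 0 := by
    intro ε hε
    have hdiagi : D ε i i < 0 := by
      rw [hDentry_diag, if_pos rfl]
      have := hAle1 i; linarith
    have hdiagj : ∀ k, k ≠ i → 0 < D ε k k := by
      intro k hk
      rw [hDentry_diag, if_neg hk]
      have := hji k hk; have := hAle1 k; linarith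
    have hdom : ∀ k, ∑ j ∈ Finset.univ.erase k, |D ε k j| < |D ε k k| := by
      intro k
      have hsum : ∑ j ∈ Finset.univ.erase k, |D ε k j| = 1 - A k k := by
        rw [← hrow k]
        refine Finset.sum_congr rfl fun j hj => ?_
        rw [hDentry_off ε k j (fun h => (Finset.mem_erase.mp hj).1 h.symm)]
      rw [hsum]
      by_cases hk : k = i
      · subst hk
        rw [abs_of_neg hdiagi, hDentry_diag, if_pos rfl]
        linarith
      · rw [abs_of_pos (hdiagj k hk), hDentry_diag, if_neg hk]
        have := hji k hk; linarith
    have hpos := det_mul_prod_diag_pos (D ε) hdom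
    have hprodneg : (∏ k, D ε k k) < 0 := by
      rw [← Finset.mul_prod_erase Finset.univ _ (Finset.mem_univ i)]
      have hppos : 0 < ∏ k ∈ Finset.univ.erase i, D ε k k :=
        Finset.prod_pos fun k hk => hdiagj k (Finset.mem_erase.mp hk).1
      exact mul_neg_of_neg_of_pos hdiagi hppos
    nlinarith
  -- continuity of ε ↦ det (D ε)
  have hDcont : Continuous fun ε => (D ε).det := by
    apply Continuous.matrix_det
    apply continuous_matrix
    intro k j
    by_cases hkj : k = j
    · subst hkj
      refine Continuous.congr ?_ fun ε => (hDentry_diag ε k).symm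
      by_cases hki : k = i
      · simp only [if_pos hki]
        exact continuous_const.sub (continuous_const.add continuous_id)
      · simp only [if_neg hki]
        exact continuous_const
    · refine Continuous.congr ?_ fun ε => (hDentry_off ε k j hkj).symm
      exact continuous_const
  -- limit: det (D 0) ≤ 0
  have hD0 : (D 0).det ≤ 0 := by
    have htend : Filter.Tendsto (fun ε => (D ε).det) (nhdsWithin 0 (Set.Ioi 0)) (nhds ((D 0).det)) :=
      (hDcont.tendsto 0).mono_left nhdsWithin_le_nhds
    refine le_of_tendsto htend ?_
    filter_upwards [self_mem_nhdsWithin] with ε hε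
    exact le_of_lt (hDneg ε hε)
  have hD0eq : D 0 = A + 1 - Matrix.diagonal e := by
    have hfun : (fun k => if k = i then e i + 0 else e k) = e := by
      funext k; by_cases hk : k = i <;> simp [hk]
    show A + 1 - Matrix.diagonal (fun k => if k = i then e i + 0 else e k)
        = A + 1 - Matrix.diagonal e
    rw [hfun]
  -- the function g t = det (B - t • 1)
  set g : ℝ → ℝ := fun t => (B - t • (1 : Matrix (Fin n) (Fin n) ℝ)).det with hg
  have hgcont : Continuous g := by
    apply Continuous.matrix_det
    apply continuous_matrix
    intro k j
    simp only [hg, Matrix.sub_apply, Matrix.smul_apply, smul_eq_mul]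
    exact continuous_const.sub (continuous_id.mul continuous_const)
  have hgm1 : g (-1) ≤ 0 := by
    have : B - (-1 : ℝ) • (1 : Matrix (Fin n) (Fin n) ℝ) = A + 1 - Matrix.diagonal e := by
      rw [hB, neg_smul, one_smul, sub_neg_eq_add]; abel
    rw [hg]; dsimp only; rw [this, ← hD0eq]; exact hD0
  -- choose very negative T
  set S : ℝ := ∑ k, ∑ j, |B k j| with hS
  have hS0 : 0 ≤ S := Finset.sum_nonneg fun k _ => Finset.sum_nonneg fun j _ => abs_nonneg _
  set T : ℝ := -(2 + S) with hT
  have hT1 : T ≤ -1 := by simp only [hT]; linarith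
  have hgT : 0 < g T := by
    have hdom : ∀ k, ∑ j ∈ Finset.univ.erase k,
        |(B - T • (1 : Matrix (Fin n) (Fin n) ℝ)) k j| < |(B - T • 1) k k| := by
      intro k
      have hrowS : ∑ j, |B k j| ≤ S :=
        Finset.single_le_sum (f := fun r => ∑ j, |B r j|)
          (fun r _ => Finset.sum_nonneg fun j _ => abs_nonneg _) (Finset.mem_univ k)
      have herase : ∑ j ∈ Finset.univ.erase k, |B k j| = (∑ j, |B k j|) - |B k k| :=
        Finset.sum_erase_eq_sub (Finset.mem_univ k)
      have hoff : ∀ j ∈ Finset.univ.erase k, (B - T • (1:Matrix (Fin n) (Fin n) ℝ)) k j = B k j := by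
        intro j hj
        have : k ≠ j := fun h => (Finset.mem_erase.mp hj).1 h.symm
        simp [Matrix.one_apply_ne this]
      have hdiag : (B - T • (1:Matrix (Fin n) (Fin n) ℝ)) k k = B k k - T := by
        simp [Matrix.one_apply_eq]
      rw [hdiag, Finset.sum_congr rfl fun j hj => by rw [hoff j hj]]
      have h1 : B k k - T = B k k + 2 + S := by rw [hT]; ring
      have h2 : 0 < B k k - T := by
        have : -B k k ≤ |B k k| := neg_le_abs _
        have hbk : |B k k| ≤ ∑ j, |B k j| :=
          Finset.single_le_sum (f := fun j => |B k j|)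
            (fun j _ => abs_nonneg _) (Finset.mem_univ k)
        linarith [neg_le_abs (B k k)]
      rw [abs_of_pos h2]
      have : ∑ j ∈ Finset.univ.erase k, |B k j| ≤ S - |B k k| := by
        rw [herase]; linarith
      have := neg_le_abs (B k k)
      linarith
    have hpos := det_mul_prod_diag_pos _ hdom
    have hprodpos : 0 < ∏ k, (B - T • (1:Matrix (Fin n) (Fin n) ℝ)) k k := by
      apply Finset.prod_pos
      intro k _
      have : (B - T • (1:Matrix (Fin n) (Fin n) ℝ)) k k = B k k - T := by
        simp [Matrix.one_apply_eq]
      rw [this]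
      have hrowS : |B k k| ≤ S := by
        calc |B k k| ≤ ∑ j, |B k j| :=
              Finset.single_le_sum (f := fun j => |B k j|)
                (fun j _ => abs_nonneg _) (Finset.mem_univ k)
          _ ≤ S := Finset.single_le_sum (f := fun r => ∑ j, |B r j|)
              (fun r _ => Finset.sum_nonneg fun j _ => abs_nonneg _) (Finset.mem_univ k)
      have := neg_le_abs (B k k)
      rw [hT]; linarith
    nlinarith
  -- IVT
  have hmem0 : (0:ℝ) ∈ Set.uIcc (g T) (g (-1)) :=
    Set.mem_uIcc.mpr (Or.inr ⟨hgm1, le_of_lt hgT⟩)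
  obtain ⟨t0, ht0mem, ht0⟩ := intermediate_value_uIcc (a := T) (b := -1)
    (hgcont.continuousOn) hmem0
  rw [Set.uIcc_of_le hT1] at ht0mem
  have ht0le : t0 ≤ -1 := ht0mem.2
  -- lift to ℂ
  set Bc : Matrix (Fin n) (Fin n) ℂ := B.map (fun x => (x : ℂ)) with hBc
  have hmemspec : (t0 : ℂ) ∈ spectrum ℂ Bc := by
    rw [spectrum.mem_iff]
    intro hunit
    have hdet := (Matrix.isUnit_iff_isUnit_det _).mp hunit
    have key : (algebraMap ℂ (Matrix (Fin n) (Fin n) ℂ)) (t0:ℂ) - Bc =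
        ((t0 • (1 : Matrix (Fin n) (Fin n) ℝ) - B).map (algebraMap ℝ ℂ)) := by
      ext k j
      by_cases hkj : k = j <;>
        simp [hBc, Matrix.algebraMap_matrix_apply, hkj, Matrix.one_apply_ne, Complex.ofReal_sub]
    have hdet0 : ((algebraMap ℂ (Matrix (Fin n) (Fin n) ℂ)) (t0:ℂ) - Bc).det = 0 := by
      rw [key, ← RingHom.mapMatrix_apply, ← RingHom.map_det]
      have h1 : (t0 • (1 : Matrix (Fin n) (Fin n) ℝ) - B) = -(B - t0 • 1) :=
        (neg_sub _ _).symm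
      have h2 : (B - t0 • (1 : Matrix (Fin n) (Fin n) ℝ)).det = 0 := ht0
      rw [h1, Matrix.det_neg, h2]
      simp
    rw [hdet0] at hdet
    exact not_isUnit_zero hdet
  have hnorm : (1 : ℝ≥0∞) ≤ (‖(t0:ℂ)‖₊ : ℝ≥0∞) := by
    rw [← ENNReal.coe_one, ENNReal.coe_le_coe, ← NNReal.coe_le_coe]
    rw [coe_nnnorm]
    simp only [NNReal.coe_one, Complex.norm_real, Real.norm_eq_abs]
    calc (1:ℝ) ≤ -t0 := by linarith
      _ ≤ |t0| := neg_le_abs t0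
  refine le_trans hnorm ?_
  exact le_iSup₂ (f := fun k (_ : k ∈ spectrum ℂ Bc) => (‖k‖₊ : ℝ≥0∞)) (t0:ℂ) hmemspec
end

section
/- For any complex n×n matrices X and Y: |det X − det Y| ≤ n · ‖X − Y‖_∞ · max(‖X‖_∞, ‖Y‖_∞)^{n−1}, where ‖·‖_∞ is the induced matrix infinity-norm (maximum absolute row sum). -/
/-!
The determinant is multilinear in the rows, so `det A - det B` telescopes into `n` determinants,
the `k`-th having rows `b₁, …, b_{k-1}, a_k - b_k, a_{k+1}, …, a_n`. Each of these is bounded by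
the product of the `ℓ¹` norms of its rows, i.e. by `‖A - B‖ * max ‖A‖ ‖B‖ ^ (n - 1)` for the
`ℓ^∞` operator norm, which is the largest `ℓ¹` norm of a row.
-/

open Matrix

/-- The induced matrix infinity norm (maximum absolute row sum) for complex matrices. -/
noncomputable def cInfNorm {n : ℕ} (M : Matrix (Fin n) (Fin n) ℂ) : ℝ :=
  ⨆ i, ∑ j, ‖M i j‖

open Finset Equiv
open scoped Matrix.Norms.Operator

namespace Matrix

variable {ι R 𝕜 : Type*} [Fintype ι] [DecidableEq ι]

theorem norm_det_le_prod_sum_norm [NormedCommRing R] [NormOneClass R] (A : Matrix ι ι R) :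
    ‖A.det‖ ≤ ∏ i, ∑ j, ‖A i j‖ := by
  let coePerm : Perm ι ↪ (ι → ι) := ⟨(⇑), DFunLike.coe_injective⟩
  rw [← det_transpose, det_apply, Fintype.prod_sum]
  simp only [transpose_apply]
  calc ‖∑ σ : Perm ι, Perm.sign σ • ∏ i, A i (σ i)‖
      ≤ ∑ σ : Perm ι, ∏ i, ‖A i (σ i)‖ :=
        (norm_sum_le _ _).trans <| sum_le_sum fun σ _ =>
          (norm_units_zsmul _ _).trans_le (Finset.norm_prod_le univ fun i => A i (σ i))
    _ = ∑ f ∈ univ.map coePerm, ∏ i, ‖A i (f i)‖ :=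
        (sum_map univ coePerm fun f => ∏ i, ‖A i (f i)‖).symm
    _ ≤ ∑ f : ι → ι, ∏ i, ‖A i (f i)‖ :=
        sum_le_univ_sum_of_nonneg fun f => prod_nonneg fun i _ => norm_nonneg _

theorem norm_det_sub_det_le [NontriviallyNormedField 𝕜] (A B : Matrix ι ι 𝕜) :
    ‖A.det - B.det‖ ≤
      Fintype.card ι * max ‖A‖ ‖B‖ ^ (Fintype.card ι - 1) * ‖A - B‖ := by
  let rowsL1 : Matrix ι ι 𝕜 → ι → WithLp 1 (ι → 𝕜) := fun M i => WithLp.toLp 1 (M i)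
  let detL1 := detRowAlternating.compLinearMap (WithLp.linearEquiv 1 𝕜 (ι → 𝕜)).toLinearMap
  have hbound (m : ι → WithLp 1 (ι → 𝕜)) : ‖detL1 m‖ ≤ 1 * ∏ i, ‖m i‖ := by
    simp only [one_mul, PiLp.norm_eq_of_L1]
    exact norm_det_le_prod_sum_norm (of fun i => (m i).ofLp)
  -- the `ℓ^∞` operator norm of a matrix is by definition the sup norm of its rows in `ℓ¹`
  have h := detL1.norm_image_sub_le_of_bound zero_le_one hbound (rowsL1 A) (rowsL1 B)
  rw [one_mul] at h
  exact h

theorem linfty_opNorm_eq_ciSup [SeminormedAddCommGroup R] {m n : Type*} [Fintype m] [Fintype n]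
    (A : Matrix m n R) : ‖A‖ = ⨆ i, ∑ j, ‖A i j‖ := by
  simp [linfty_opNorm_def, Finset.sup_univ_eq_ciSup, NNReal.coe_iSup]

end Matrix

theorem stmt17 {n : ℕ} (X Y : Matrix (Fin n) (Fin n) ℂ) :
    ‖X.det - Y.det‖ ≤
      (n : ℝ) * cInfNorm (X - Y) * (max (cInfNorm X) (cInfNorm Y)) ^ (n - 1) := by
  simp only [cInfNorm, ← linfty_opNorm_eq_ciSup]
  calc ‖X.det - Y.det‖ ≤ n * max ‖X‖ ‖Y‖ ^ (n - 1) * ‖X - Y‖ := by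
        simpa only [Fintype.card_fin] using norm_det_sub_det_le X Y
    _ = n * ‖X - Y‖ * max ‖X‖ ‖Y‖ ^ (n - 1) := by ring
end

section
/- For complex n×n matrices A and B, every eigenvalue μ of B satisfies: min over eigenvalues λ of A of |λ − μ| is at most n^{1/n} · ‖A − B‖_∞^{1/n} · (‖A‖_∞ + ‖B‖_∞)^{1 − 1/n}, where ‖·‖_∞ is the induced matrix infinity norm. -/
/-!
Let `p` be the characteristic polynomial of `A`. Since `p(μ) = ∏ (μ - λ)` over the eigenvalues
of `A` counted with multiplicity, the eigenvalue `λ` closest to `μ` has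
`|λ - μ|ⁿ ≤ |det (μI - A)|`. The matrix `μI - B` is singular, so it has a nonzero left null
vector `w`; replacing the row `i` of `X = μI - A` at which `|w i|` is largest by `wᵀX = wᵀ(B - A)`
multiplies the determinant by `w i`, and bounding the new determinant by the product of its row
sums gives `|det X| ≤ n ‖A - B‖ ‖X‖ⁿ⁻¹`, where `‖X‖ ≤ |μ| + ‖A‖ ≤ ‖B‖ + ‖A‖`.
Taking `n`-th roots gives the bound.
-/

open Matrix

open Polynomial

attribute [local instance] Matrix.linftyOpSeminormedAddCommGroup Matrix.linftyOpNormedRing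
  Matrix.linftyOpNormedAlgebra

theorem cInfNorm_eq_norm {n : ℕ} (M : Matrix (Fin n) (Fin n) ℂ) : cInfNorm M = ‖M‖ := by
  rw [cInfNorm, linfty_opNorm_def, Finset.sup_univ_eq_ciSup, NNReal.coe_iSup]
  simp

theorem Matrix.sum_norm_le_linfty_opNorm {m n α : Type*} [Fintype m] [Fintype n]
    [SeminormedAddCommGroup α] (M : Matrix m n α) (i : m) : ∑ j, ‖M i j‖ ≤ ‖M‖ := by
  have h := Finset.le_sup (f := fun i => ∑ j, ‖M i j‖₊) (Finset.mem_univ i)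
  rw [← linfty_opNNNorm_def, ← NNReal.coe_le_coe, NNReal.coe_sum] at h
  exact h

theorem Matrix.sum_norm_vecMul_le {m n α : Type*} [Fintype m] [Fintype n]
    [NonUnitalSeminormedRing α] (v : m → α) (M : Matrix m n α) :
    ∑ j, ‖(v ᵥ* M) j‖ ≤ (∑ i, ‖v i‖) * ‖M‖ := by
  rw [← linfty_opNorm_replicateRow (ι := Unit), ← linfty_opNorm_replicateRow (ι := Unit),
    replicateRow_vecMul]
  exact linfty_opNorm_mul _ _

section

variable {ι : Type*} [Fintype ι] [DecidableEq ι]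

theorem Matrix.norm_det_le_prod_sum_norm_s18 {R : Type*} [NormedCommRing R] [NormOneClass R]
    (M : Matrix ι ι R) : ‖M.det‖ ≤ ∏ i, ∑ j, ‖M i j‖ := by
  let coeFn : Equiv.Perm ι ↪ (ι → ι) := ⟨(⇑), DFunLike.coe_injective⟩
  rw [← det_transpose, det_apply]
  calc ‖∑ σ : Equiv.Perm ι, Equiv.Perm.sign σ • ∏ i, Mᵀ (σ i) i‖
      ≤ ∑ σ : Equiv.Perm ι, ∏ i, ‖M i (σ i)‖ := by
        refine (norm_sum_le _ _).trans (Finset.sum_le_sum fun σ _ => ?_)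
        rw [norm_units_zsmul]
        exact Finset.norm_prod_le _ _
    _ = ∑ f ∈ Finset.univ.map coeFn, ∏ i, ‖M i (f i)‖ := by rw [Finset.sum_map]; rfl
    _ ≤ ∑ f : ι → ι, ∏ i, ‖M i (f i)‖ :=
        Finset.sum_le_univ_sum_of_nonneg fun f => by positivity
    _ = ∏ i, ∑ j, ‖M i j‖ := (Fintype.prod_sum fun i j => ‖M i j‖).symm

theorem Matrix.norm_det_updateRow_le {R : Type*} [NormedCommRing R] [NormOneClass R]
    {M : Matrix ι ι R} {c : ℝ} (hM : ∀ i, ∑ j, ‖M i j‖ ≤ c) (i : ι) (v : ι → R) :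
    ‖(M.updateRow i v).det‖ ≤ (∑ j, ‖v j‖) * c ^ (Fintype.card ι - 1) := by
  refine (norm_det_le_prod_sum_norm_s18 _).trans ?_
  rw [← Finset.mul_prod_erase _ _ (Finset.mem_univ i), updateRow_self]
  gcongr
  calc ∏ k ∈ Finset.univ.erase i, ∑ j, ‖M.updateRow i v k j‖
      ≤ ∏ _k ∈ Finset.univ.erase i, c :=
        Finset.prod_le_prod (fun _ _ => by positivity)
          fun k hk => by rw [updateRow_ne (Finset.ne_of_mem_erase hk)]; exact hM k
    _ = c ^ (Fintype.card ι - 1) := by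
        rw [Finset.prod_const, Finset.card_erase_of_mem (Finset.mem_univ i), Finset.card_univ]

theorem Matrix.norm_det_le_of_det_eq_zero {K : Type*} [NormedField K] {X Y : Matrix ι ι K}
    (hY : Y.det = 0) :
    ‖X.det‖ ≤ Fintype.card ι * ‖X - Y‖ * ‖X‖ ^ (Fintype.card ι - 1) := by
  obtain ⟨w, hw, hwY⟩ := exists_vecMul_eq_zero_iff.2 hY
  obtain ⟨j, hj⟩ := Function.ne_iff.1 hw
  obtain ⟨i, -, hi⟩ := Finset.exists_max_image Finset.univ (‖w ·‖) ⟨j, Finset.mem_univ j⟩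
  have hwi : 0 < ‖w i‖ := (norm_pos_iff.2 hj).trans_le (hi j (Finset.mem_univ j))
  have hrow : w ᵥ* X = w ᵥ* (X - Y) := by rw [vecMul_sub, hwY, sub_zero]
  have hdet : (X.updateRow i (w ᵥ* X)).det = w i * X.det := by
    rw [vecMul_eq_sum, det_updateRow_sum, smul_eq_mul]
  refine le_of_mul_le_mul_left ?_ hwi
  calc ‖w i‖ * ‖X.det‖ = ‖(X.updateRow i (w ᵥ* (X - Y))).det‖ := by
        rw [← hrow, hdet, norm_mul]
    _ ≤ (∑ j, ‖(w ᵥ* (X - Y)) j‖) * ‖X‖ ^ (Fintype.card ι - 1) :=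
        norm_det_updateRow_le (sum_norm_le_linfty_opNorm X) i _
    _ ≤ (∑ _j : ι, ‖w i‖) * ‖X - Y‖ * ‖X‖ ^ (Fintype.card ι - 1) := by
        gcongr
        exact (sum_norm_vecMul_le w _).trans
          (by gcongr with j; exact hi j (Finset.mem_univ j))
    _ = ‖w i‖ * (Fintype.card ι * ‖X - Y‖ * ‖X‖ ^ (Fintype.card ι - 1)) := by
        rw [Finset.sum_const, Finset.card_univ, nsmul_eq_mul]
        ring

end

theorem Polynomial.Splits.exists_mem_roots_norm_sub_pow_natDegree_le {K : Type*} [NormedField K]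
    {p : K[X]} (hsplit : p.Splits) (hm : p.Monic) (hp : 0 < p.natDegree) (z : K) :
    ∃ a ∈ p.roots, ‖a - z‖ ^ p.natDegree ≤ ‖p.eval z‖ := by
  have hcard := hsplit.natDegree_eq_card_roots
  obtain ⟨a, ha, hmin⟩ := Multiset.exists_min_image (fun b => ‖b - z‖)
    (Multiset.card_pos.1 (hcard ▸ hp))
  refine ⟨a, ha, ?_⟩
  calc ‖a - z‖ ^ p.natDegree = (p.roots.map fun _ => ‖a - z‖).prod := by
        rw [Multiset.map_const', Multiset.prod_replicate, hcard]
    _ ≤ (p.roots.map fun b => ‖z - b‖).prod :=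
        Multiset.prod_map_le_prod_map₀ _ _ (fun _ _ => norm_nonneg _)
          fun b hb => (hmin b hb).trans_eq (norm_sub_rev _ _)
    _ = ‖p.eval z‖ := by
        rw [hsplit.eval_eq_prod_roots_of_monic hm, ← normHom_apply, map_multiset_prod,
          Multiset.map_map]
        rfl

theorem spectrum.norm_algebraMap_sub_le {𝕜 A : Type*} [NormedField 𝕜] [NormedRing A]
    [NormedAlgebra 𝕜 A] [CompleteSpace A] [NormOneClass A] {a b : A} {k : 𝕜}
    (hk : k ∈ spectrum 𝕜 b) : ‖algebraMap 𝕜 A k - a‖ ≤ ‖a‖ + ‖b‖ := by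
  calc ‖algebraMap 𝕜 A k - a‖ ≤ ‖k‖ + ‖a‖ := by
        simpa only [norm_algebraMap'] using norm_sub_le (algebraMap 𝕜 A k) a
    _ ≤ ‖a‖ + ‖b‖ := by linarith [spectrum.norm_le_norm_of_mem hk]

theorem Real.le_rpow_mul_rpow_mul_rpow_of_pow_le {m a b c : ℝ} {n : ℕ} (hn : 0 < n)
    (hm : 0 ≤ m) (ha : 0 ≤ a) (hb : 0 ≤ b) (hc : 0 ≤ c) (h : m ^ n ≤ a * b * c ^ (n - 1)) :
    m ≤ a ^ (1 / n : ℝ) * b ^ (1 / n : ℝ) * c ^ (1 - 1 / n : ℝ) := by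
  have hc' : (c ^ (n - 1)) ^ (1 / n : ℝ) = c ^ (1 - 1 / n : ℝ) := by
    rw [← Real.rpow_natCast, ← Real.rpow_mul hc, Nat.cast_sub hn, Nat.cast_one, sub_mul,
      mul_one_div_cancel (by positivity), one_mul]
  calc m = (m ^ n) ^ (1 / n : ℝ) := by
        rw [one_div, Real.pow_rpow_inv_natCast hm hn.ne']
    _ ≤ (a * b * c ^ (n - 1)) ^ (1 / n : ℝ) := by gcongr
    _ = _ := by rw [Real.mul_rpow (by positivity) (by positivity), Real.mul_rpow ha hb, hc']

theorem stmt18 {n : ℕ} (hn : 0 < n) (A B : Matrix (Fin n) (Fin n) ℂ)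
    (μ : ℂ) (hμ : μ ∈ spectrum ℂ B) :
    ∃ lam ∈ spectrum ℂ A,
      ‖lam - μ‖ ≤
        (n : ℝ) ^ ((1 : ℝ) / n) * (cInfNorm (A - B)) ^ ((1 : ℝ) / n) *
          (cInfNorm A + cInfNorm B) ^ (1 - (1 : ℝ) / n) := by
  have : Nonempty (Fin n) := ⟨⟨0, hn⟩⟩
  have hdeg : A.charpoly.natDegree = n := by rw [charpoly_natDegree_eq_dim, Fintype.card_fin]
  obtain ⟨lam, hlam, hpow⟩ :=
    (IsAlgClosed.splits A.charpoly).exists_mem_roots_norm_sub_pow_natDegree_le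
      A.charpoly_monic (hdeg.symm ▸ hn) μ
  rw [hdeg, eval_charpoly] at hpow
  refine ⟨lam, mem_spectrum_iff_isRoot_charpoly.2 (isRoot_of_mem_roots hlam), ?_⟩
  have hdetB : (scalar (Fin n) μ - B).det = 0 := by
    rw [← eval_charpoly]
    exact (mem_spectrum_iff_isRoot_charpoly.1 hμ).eq_zero
  have hbound : ‖lam - μ‖ ^ n ≤ n * ‖A - B‖ * (‖A‖ + ‖B‖) ^ (n - 1) :=
    calc ‖lam - μ‖ ^ n ≤ ‖(scalar (Fin n) μ - A).det‖ := hpow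
      _ ≤ n * ‖(scalar (Fin n) μ - A) - (scalar (Fin n) μ - B)‖ *
            ‖scalar (Fin n) μ - A‖ ^ (n - 1) := by
          simpa only [Fintype.card_fin] using norm_det_le_of_det_eq_zero (X := scalar (Fin n) μ - A) hdetB
      _ ≤ n * ‖A - B‖ * (‖A‖ + ‖B‖) ^ (n - 1) := by
          rw [sub_sub_sub_cancel_left, norm_sub_rev]
          gcongr
          exact spectrum.norm_algebraMap_sub_le hμ
  simp only [cInfNorm_eq_norm]
  exact Real.le_rpow_mul_rpow_mul_rpow_of_pow_le hn (norm_nonneg _) (Nat.cast_nonneg n)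
    (norm_nonneg _) (by positivity) hbound
end
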